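/- arXiv:2304.12416 — 7 statements merged into one kernel-verified Lean document; each statement's English description precedes it below -/
import Mathlib

section
/- Let 0 < p_- ≤ p_n < ∞ for all n and suppose there exists 0 < c < 1 with M := Σ_n c^{p_n} < ∞. Then ℓ_{p_n} = ℓ_∞ with equivalent norms; more precisely, ‖a‖_∞ ≤ ‖a‖_{p_n} ≤ (max{1,M}^{1/p_-}/c) ‖a‖_∞ for every sequence a. -/
/-!
If the constant sequence `d` has modular `∑ d ^ p_n ≤ 1`, then every `a` with `|a_n| ≤ S` satisfies
`∑ (|a_n| / (S / d)) ^ p_n ≤ 1`, so `‖a‖_{p_n} ≤ ‖a‖_∞ / d`. The choice `d = c / max{1,M}^{1/p_-}`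
works: `p_n ≥ p_-` and `max{1,M} ≥ 1` give `d ^ p_n ≤ c ^ p_n / max{1,M}`, summing to at most `1`.
Conversely `(|a_n| / λ) ^ p_n ≤ 1` forces `|a_n| ≤ λ` for every admissible `λ`.
-/

open scoped ENNReal

/-- Luxemburg quasi-norm of `ℓ_{p_n}` (finite exponents), `∞` if no admissible `λ`. -/
noncomputable def vNorm (p : ℕ → ℝ) (a : ℕ → ℝ) : ℝ≥0∞ :=
  sInf {l : ℝ≥0∞ | 0 < l ∧ l ≠ ⊤ ∧
    (∑' n, ENNReal.ofReal ((|a n| / l.toReal) ^ p n)) ≤ 1}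

/-- The `ℓ_∞` norm of a sequence. -/
noncomputable def supNorm (a : ℕ → ℝ) : ℝ≥0∞ := ⨆ n, ENNReal.ofReal |a n|

/-- `vNorm p a` is by definition the infimum of the `l > 0` with `vModular p a l ≤ 1`. -/
noncomputable def vModular (p a : ℕ → ℝ) (l : ℝ) : ℝ≥0∞ :=
  ∑' n, ENNReal.ofReal ((|a n| / l) ^ p n)

section

variable {p a : ℕ → ℝ}

theorem vNorm_le_ofReal {l : ℝ} (hl : 0 < l) (h : vModular p a l ≤ 1) :
    vNorm p a ≤ ENNReal.ofReal l :=
  sInf_le ⟨ENNReal.ofReal_pos.2 hl, ENNReal.ofReal_ne_top, by rwa [ENNReal.toReal_ofReal hl.le]⟩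

theorem abs_le_of_vModular_le_one (hp : ∀ n, 0 < p n) {l : ℝ} (hl : 0 < l)
    (h : vModular p a l ≤ 1) (n : ℕ) : |a n| ≤ l := by
  have hterm : (|a n| / l) ^ p n ≤ 1 := ENNReal.ofReal_le_one.1 ((ENNReal.le_tsum n).trans h)
  exact (div_le_one hl).1 (not_lt.1 fun hlt => (Real.one_lt_rpow hlt (hp n)).not_ge hterm)

theorem supNorm_le_vNorm (hp : ∀ n, 0 < p n) : supNorm a ≤ vNorm p a := by
  refine le_sInf fun l ⟨hl0, hltop, hl⟩ => iSup_le fun n => ?_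
  calc ENNReal.ofReal |a n| ≤ ENNReal.ofReal l.toReal :=
        ENNReal.ofReal_le_ofReal
          (abs_le_of_vModular_le_one hp (ENNReal.toReal_pos hl0.ne' hltop) hl n)
    _ = l := ENNReal.ofReal_toReal hltop

theorem abs_le_toReal_supNorm (h : supNorm a ≠ ⊤) (n : ℕ) : |a n| ≤ (supNorm a).toReal := by
  rw [← ENNReal.toReal_ofReal (abs_nonneg (a n))]
  exact ENNReal.toReal_mono h (le_iSup (fun n => ENNReal.ofReal |a n|) n)

theorem vModular_div_le (hp : ∀ n, 0 ≤ p n) {d S : ℝ} (hd : 0 < d) (hS : 0 < S)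
    (ha : ∀ n, |a n| ≤ S) : vModular p a (S / d) ≤ ∑' n, ENNReal.ofReal (d ^ p n) := by
  refine ENNReal.tsum_le_tsum fun n => ENNReal.ofReal_le_ofReal ?_
  refine Real.rpow_le_rpow (by positivity) ?_ (hp n)
  rw [div_div_eq_mul_div, div_le_iff₀ hS]
  simpa only [mul_comm d S] using mul_le_mul_of_nonneg_right (ha n) hd.le

theorem vNorm_le_of_abs_le (hp : ∀ n, 0 ≤ p n) {d S : ℝ} (hd : 0 < d)
    (hmod : ∑' n, ENNReal.ofReal (d ^ p n) ≤ 1) (hS : 0 < S) (ha : ∀ n, |a n| ≤ S) :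
    vNorm p a ≤ ENNReal.ofReal (S / d) :=
  vNorm_le_ofReal (div_pos hS hd) ((vModular_div_le hp hd hS ha).trans hmod)

theorem vNorm_le_mul_supNorm (hp : ∀ n, 0 ≤ p n) {d : ℝ} (hd : 0 < d)
    (hmod : ∑' n, ENNReal.ofReal (d ^ p n) ≤ 1) :
    vNorm p a ≤ ENNReal.ofReal (1 / d) * supNorm a := by
  rcases eq_or_ne (supNorm a) ⊤ with htop | htop
  · rw [htop, ENNReal.mul_top (by simpa using hd)]
    exact le_top
  rcases eq_or_ne (supNorm a) 0 with hzero | hzero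
  · have ha : ∀ n, a n = 0 := fun n =>
      abs_nonpos_iff.1 (by simpa [hzero] using abs_le_toReal_supNorm htop n)
    rw [hzero, mul_zero]
    refine ENNReal.le_of_forall_pos_le_add fun ε hε _ => ?_
    have hεd : 0 < (ε : ℝ) * d := mul_pos hε hd
    calc vNorm p a ≤ ENNReal.ofReal (ε * d / d) :=
          vNorm_le_of_abs_le hp hd hmod hεd fun n => by simpa [ha n] using hεd.le
      _ = 0 + ε := by rw [mul_div_cancel_right₀ _ hd.ne', zero_add, ENNReal.ofReal_coe_nnreal]
  · have hS : 0 < (supNorm a).toReal := ENNReal.toReal_pos hzero htop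
    calc vNorm p a ≤ ENNReal.ofReal ((supNorm a).toReal / d) :=
          vNorm_le_of_abs_le hp hd hmod hS (abs_le_toReal_supNorm htop)
      _ = ENNReal.ofReal (1 / d) * supNorm a := by
          rw [← one_div_mul_eq_div, ENNReal.ofReal_mul (by positivity), ENNReal.ofReal_toReal htop]

end

theorem div_rpow_le_rpow_div {B c pm q : ℝ} (hB : 1 ≤ B) (hc : 0 ≤ c) (hpm : 0 < pm)
    (hq : pm ≤ q) : (c / B ^ (1 / pm)) ^ q ≤ c ^ q / B := by
  have hB0 : 0 < B := one_pos.trans_le hB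
  rw [Real.div_rpow hc (by positivity), ← Real.rpow_mul hB0.le]
  refine div_le_div_of_nonneg_left (by positivity) hB0 ?_
  exact Real.self_le_rpow_of_one_le hB (by rwa [one_div_mul_eq_div, le_div_iff₀ hpm, one_mul])

theorem stmt_3_general (p : ℕ → ℝ) (pm : ℝ) (hpm0 : 0 < pm) (hle : ∀ n, pm ≤ p n)
    (c : ℝ) (hc0 : 0 < c) (hM : Summable fun n => c ^ p n)
    (M : ℝ) (hMdef : M = ∑' n, c ^ p n) (a : ℕ → ℝ) :
    supNorm a ≤ vNorm p a ∧
      vNorm p a ≤ ENNReal.ofReal ((max 1 M) ^ (1 / pm) / c) * supNorm a := by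
  have hp : ∀ n, 0 < p n := fun n => hpm0.trans_le (hle n)
  have hB : 1 ≤ max 1 M := le_max_left 1 M
  have hB0 : 0 < max 1 M := one_pos.trans_le hB
  have hmod : ∑' n, ENNReal.ofReal ((c / (max 1 M) ^ (1 / pm)) ^ p n) ≤ 1 :=
    calc ∑' n, ENNReal.ofReal ((c / (max 1 M) ^ (1 / pm)) ^ p n)
        ≤ ∑' n, ENNReal.ofReal (c ^ p n / max 1 M) := ENNReal.tsum_le_tsum fun n =>
          ENNReal.ofReal_le_ofReal (div_rpow_le_rpow_div hB hc0.le hpm0 (hle n))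
      _ = ENNReal.ofReal (M / max 1 M) := by
          rw [← ENNReal.ofReal_tsum_of_nonneg (fun n => by positivity) (hM.div_const _),
            tsum_div_const, hMdef]
      _ ≤ 1 := ENNReal.ofReal_le_one.2 ((div_le_one hB0).2 (le_max_right 1 M))
  refine ⟨supNorm_le_vNorm hp, ?_⟩
  simpa only [one_div_div] using
    vNorm_le_mul_supNorm (fun n => (hp n).le) (by positivity) hmod

theorem stmt_3 (p : ℕ → ℝ) (pm : ℝ) (hpm0 : 0 < pm) (hle : ∀ n, pm ≤ p n)
    (c : ℝ) (hc0 : 0 < c) (hc1 : c < 1) (hM : Summable fun n => c ^ p n)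
    (M : ℝ) (hMdef : M = ∑' n, c ^ p n) (a : ℕ → ℝ) :
    supNorm a ≤ vNorm p a ∧
      vNorm p a ≤ ENNReal.ofReal ((max 1 M) ^ (1 / pm) / c) * supNorm a :=
  stmt_3_general p pm hpm0 hle c hc0 hM M hMdef a
end

section
/- Let 0 < p_- ≤ p_n < q_n < ∞ for all n and K > 1. Assume Σ_n c^{1/(1/p_n - 1/q_n)} = ∞ for all 0 < c < 1. Then there exists a sequence (a_n) with a_n > 0 such that Σ_n a_n^{q_n} ≤ 1 and Σ_n (a_n/K)^{p_n} = ∞. -/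
open scoped ENNReal
open Finset

lemma tailA (f : ℕ → ℝ) (hf : ∀ n, 0 ≤ f n)
    (h : (∑' n, ENNReal.ofReal (f n)) = ⊤) (N : ℕ) :
    ∃ M, N < M ∧ 1 ≤ ∑ n ∈ Finset.Ico N M, f n := by
  set B := ∑ n ∈ Finset.range N, f n with hBdef
  have hB : 0 ≤ B := Finset.sum_nonneg fun n _ => hf n
  have h1 : ENNReal.ofReal (1 + B) < ∑' n, ENNReal.ofReal (f n) := by
    rw [h]; exact ENNReal.ofReal_lt_top
  rw [ENNReal.tsum_eq_iSup_sum] at h1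
  obtain ⟨s, hs⟩ := lt_iSup_iff.mp h1
  rw [← ENNReal.ofReal_sum_of_nonneg (fun n _ => hf n)] at hs
  have hs' : 1 + B < ∑ n ∈ s, f n := by
    by_contra hcon
    push_neg at hcon
    exact absurd (ENNReal.ofReal_le_ofReal hcon) hs.not_ge
  refine ⟨max (N + 1) (s.sup id + 1),
    lt_of_lt_of_le (Nat.lt_succ_self N) (le_max_left _ _), ?_⟩
  have hsub : s \ Finset.range N ⊆ Finset.Ico N (max (N + 1) (s.sup id + 1)) := by
    intro n hn
    simp only [Finset.mem_sdiff, Finset.mem_range, not_lt] at hn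
    refine Finset.mem_Ico.mpr ⟨hn.2, ?_⟩
    calc n ≤ s.sup id := Finset.le_sup (f := id) hn.1
      _ < s.sup id + 1 := Nat.lt_succ_self _
      _ ≤ _ := le_max_right _ _
  have h2 : ∑ n ∈ s, f n ≤ B + ∑ n ∈ s \ Finset.range N, f n := by
    rw [← Finset.sum_inter_add_sum_sdiff s (Finset.range N) f]
    have : ∑ n ∈ s ∩ Finset.range N, f n ≤ B :=
      Finset.sum_le_sum_of_subset_of_nonneg (Finset.inter_subset_right)
        (fun n _ _ => hf n)
    linarith
  have h3 : ∑ n ∈ s \ Finset.range N, f n ≤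
      ∑ n ∈ Finset.Ico N (max (N + 1) (s.sup id + 1)), f n :=
    Finset.sum_le_sum_of_subset_of_nonneg hsub (fun n _ _ => hf n)
  linarith

theorem stmt_6 (p q : ℕ → ℝ) (pm : ℝ) (hpm0 : 0 < pm) (hle : ∀ n, pm ≤ p n)
    (hpq : ∀ n, p n < q n) (K : ℝ) (hK : 1 < K)
    (hdiv : ∀ c : ℝ, 0 < c → c < 1 →
      (∑' n, ENNReal.ofReal (c ^ (1 / (1 / p n - 1 / q n)))) = ⊤) :
    ∃ a : ℕ → ℝ, (∀ n, 0 < a n) ∧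
      (∑' n, ENNReal.ofReal (a n ^ q n)) ≤ 1 ∧
      (∑' n, ENNReal.ofReal ((a n / K) ^ p n)) = ⊤ := by
  have hp : ∀ n, 0 < p n := fun n => lt_of_lt_of_le hpm0 (hle n)
  have hq : ∀ n, 0 < q n := fun n => (hp n).trans (hpq n)
  have hK0 : (0:ℝ) < K := lt_trans one_pos hK
  set r : ℕ → ℝ := fun n => 1 / (1 / p n - 1 / q n) with hrdef
  have hd0 : ∀ n, 0 < 1 / p n - 1 / q n := fun n =>
    sub_pos.mpr (one_div_lt_one_div_of_lt (hp n) (hpq n))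
  have hr0 : ∀ n, 0 < r n := fun n => one_div_pos.mpr (hd0 n)
  -- the per-block constants
  set D : ℕ → ℝ := fun k => (2:ℝ) ^ (((k:ℝ) + 1) / pm) with hDdef
  have hD1 : ∀ k, 1 ≤ D k := by
    intro k
    have : (2:ℝ) ^ (0:ℝ) ≤ (2:ℝ) ^ (((k:ℝ) + 1) / pm) :=
      Real.rpow_le_rpow_of_exponent_le one_le_two
        (div_nonneg (by positivity) hpm0.le)
    simpa [Real.rpow_zero] using this
  have hD0 : ∀ k, 0 < D k := fun k => lt_of_lt_of_le one_pos (hD1 k)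
  set c : ℕ → ℝ := fun k => (K * D k)⁻¹ with hcdef
  have hKD1 : ∀ k, 1 < K * D k := fun k =>
    lt_of_lt_of_le hK (le_mul_of_one_le_right hK0.le (hD1 k))
  have hc0 : ∀ k, 0 < c k := fun k => inv_pos.mpr (lt_trans one_pos (hKD1 k))
  have hc1 : ∀ k, c k < 1 := fun k => inv_lt_one_of_one_lt₀ (hKD1 k)
  have hdivk : ∀ k, (∑' n, ENNReal.ofReal ((c k) ^ r n)) = ⊤ := fun k =>
    hdiv (c k) (hc0 k) (hc1 k)
  -- block endpoints
  have step : ∀ (k N₀ : ℕ), ∃ M, N₀ < M ∧ 1 ≤ ∑ n ∈ Finset.Ico N₀ M, (c k) ^ r n :=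
    fun k N₀ => tailA _ (fun n => Real.rpow_nonneg (hc0 k).le _) (hdivk k) N₀
  choose F hF1 hF2 using step
  set N : ℕ → ℕ := fun m => Nat.rec 0 (fun k Nk => F k Nk) m with hNdef
  have hN0 : N 0 = 0 := rfl
  have hNsucc : ∀ k, N (k + 1) = F k (N k) := fun k => rfl
  have hNs : StrictMono N := strictMono_nat_of_lt_succ fun k => by
    rw [hNsucc]; exact hF1 k (N k)
  have hNle : ∀ k, k ≤ N k := fun k => hNs.le_apply
  -- block sums
  set S : ℕ → ℝ := fun k => ∑ n ∈ Finset.Ico (N k) (N (k + 1)), (c k) ^ r n with hSdef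
  have hS1 : ∀ k, 1 ≤ S k := fun k => by
    have := hF2 k (N k)
    simpa [hSdef, hNsucc] using this
  have hS0 : ∀ k, 0 < S k := fun k => lt_of_lt_of_le one_pos (hS1 k)
  set t : ℕ → ℝ := fun k => (1 / 2 : ℝ) ^ (k + 1) / S k with htdef
  have ht0 : ∀ k, 0 < t k := fun k => div_pos (by positivity) (hS0 k)
  have ht1 : ∀ k, t k ≤ 1 := fun k => by
    rw [htdef]
    refine div_le_one_of_le₀ ?_ (hS0 k).le
    calc (1/2:ℝ)^(k+1) ≤ 1 := pow_le_one₀ (by norm_num) (by norm_num)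
      _ ≤ S k := hS1 k
  -- block index
  set idx : ℕ → ℕ := fun n => Nat.findGreatest (fun k => N k ≤ n) n with hidxdef
  have hidx : ∀ k n, N k ≤ n → n < N (k + 1) → idx n = k := by
    intro k n h1 h2
    apply Nat.findGreatest_eq_iff.mpr
    refine ⟨le_trans (hNle k) h1, fun _ => h1, fun j hj hjn hP => ?_⟩
    have : N (k + 1) ≤ N j := hNs.monotone hj
    omega
  -- the sequence
  set a : ℕ → ℝ := fun n => (t (idx n) * (c (idx n)) ^ r n) ^ (1 / q n) with hadef
  have hbase : ∀ k n, 0 < t k * (c k) ^ r n := fun k n =>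
    mul_pos (ht0 k) (Real.rpow_pos_of_pos (hc0 k) _)
  have ha0 : ∀ n, 0 < a n := fun n => Real.rpow_pos_of_pos (hbase _ n) _
  -- value of a n ^ q n
  have haq : ∀ n, a n ^ q n = t (idx n) * (c (idx n)) ^ r n := by
    intro n
    simp only [hadef]
    rw [← Real.rpow_mul (hbase _ n).le, one_div_mul_cancel (hq n).ne', Real.rpow_one]
  -- key pointwise lower bound for the p-sum
  have hkey : ∀ k n, t k * ((c k) ^ r n * 2 ^ (k + 1)) ≤
      ((t k * (c k) ^ r n) ^ (1 / q n) / K) ^ p n := by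
    intro k n
    have hX : (0:ℝ) < t k * (c k) ^ r n := hbase k n
    have hcr : (0:ℝ) < (c k) ^ r n := Real.rpow_pos_of_pos (hc0 k) _
    have hKp : (0:ℝ) < K ^ p n := Real.rpow_pos_of_pos hK0 _
    have hDp : (0:ℝ) < D k ^ p n := Real.rpow_pos_of_pos (hD0 k) _
    have hrs : r n * (p n / q n) = r n - p n := by
      have h1 : p n ≠ 0 := (hp n).ne'
      have h2 : q n ≠ 0 := (hq n).ne'
      have hqp : q n - p n ≠ 0 := sub_ne_zero.mpr (hpq n).ne'
      have hrval : r n = p n * q n / (q n - p n) := by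
        simp only [hrdef]
        rw [div_sub_div 1 1 h1 h2, one_div_div]
        ring_nf
      rw [hrval]
      field_simp
      ring
    have hcp : (c k) ^ p n = (K ^ p n * D k ^ p n)⁻¹ := by
      simp only [hcdef]
      rw [← Real.mul_rpow hK0.le (hD0 k).le,
        ← Real.inv_rpow (mul_pos hK0 (hD0 k)).le]
    have e1 : ((t k * (c k) ^ r n) ^ (1 / q n) / K) ^ p n
        = t k ^ (p n / q n) * ((c k) ^ r n * D k ^ p n) := by
      rw [Real.div_rpow (Real.rpow_nonneg hX.le _) hK0.le,
          ← Real.rpow_mul hX.le, one_div_mul_eq_div,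
          Real.mul_rpow (ht0 k).le hcr.le,
          ← Real.rpow_mul (hc0 k).le, hrs,
          Real.rpow_sub (hc0 k), hcp]
      field_simp
    rw [e1]
    have h1 : t k ≤ t k ^ (p n / q n) := by
      have he1 : p n / q n ≤ 1 := (div_le_one (hq n)).mpr (hpq n).le
      have := Real.rpow_le_rpow_of_exponent_ge (ht0 k) (ht1 k) he1
      simpa [Real.rpow_one] using this
    have h2 : (2:ℝ) ^ (k + 1) ≤ D k ^ p n := by
      simp only [hDdef]
      rw [← Real.rpow_natCast (2:ℝ) (k + 1),
        ← Real.rpow_mul (by norm_num : (0:ℝ) ≤ 2)]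
      refine Real.rpow_le_rpow_of_exponent_le one_le_two ?_
      push_cast
      rw [div_mul_eq_mul_div, le_div_iff₀ hpm0]
      exact mul_le_mul_of_nonneg_left (hle n) (by positivity)
    calc t k * ((c k) ^ r n * 2 ^ (k + 1))
        ≤ t k * ((c k) ^ r n * D k ^ p n) :=
          mul_le_mul_of_nonneg_left (mul_le_mul_of_nonneg_left h2 hcr.le) (ht0 k).le
      _ ≤ t k ^ (p n / q n) * ((c k) ^ r n * D k ^ p n) :=
          mul_le_mul_of_nonneg_right h1 (by positivity)
  -- regrouping into blocks
  have hrange : ∀ (f : ℕ → ℝ) (m : ℕ), ∑ n ∈ Finset.range (N m), f n =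
      ∑ k ∈ Finset.range m, ∑ n ∈ Finset.Ico (N k) (N (k + 1)), f n := by
    intro f m
    induction m with
    | zero => simp [hN0]
    | succ m ih =>
      have hsplit : ∑ n ∈ Finset.range (N (m + 1)), f n
          = ∑ n ∈ Finset.range (N m), f n
            + ∑ n ∈ Finset.Ico (N m) (N (m + 1)), f n := by
        rw [Finset.range_eq_Ico, Finset.range_eq_Ico]
        exact (Finset.sum_Ico_consecutive f (Nat.zero_le (N m))
          (hNs.monotone (Nat.le_succ m))).symm
      rw [hsplit, ih, Finset.sum_range_succ]
  -- q-block value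
  have hblockq : ∀ k, ∑ n ∈ Finset.Ico (N k) (N (k + 1)), a n ^ q n = (1/2:ℝ) ^ (k + 1) := by
    intro k
    have : ∀ n ∈ Finset.Ico (N k) (N (k + 1)), a n ^ q n = t k * (c k) ^ r n := by
      intro n hn
      rw [Finset.mem_Ico] at hn
      rw [haq n, hidx k n hn.1 hn.2]
    rw [Finset.sum_congr rfl this, ← Finset.mul_sum]
    show t k * S k = _
    rw [htdef]
    exact div_mul_cancel₀ _ (hS0 k).ne'
  -- p-block lower bound
  have hblockp : ∀ k, (1:ℝ) ≤ ∑ n ∈ Finset.Ico (N k) (N (k + 1)), (a n / K) ^ p n := by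
    intro k
    have hterm : ∀ n ∈ Finset.Ico (N k) (N (k + 1)),
        t k * ((c k) ^ r n * 2 ^ (k + 1)) ≤ (a n / K) ^ p n := by
      intro n hn
      rw [Finset.mem_Ico] at hn
      have hi : idx n = k := hidx k n hn.1 hn.2
      simp only [hadef]
      rw [hi]
      exact hkey k n
    calc (1:ℝ) = 2 ^ (k + 1) * ((1/2:ℝ) ^ (k + 1)) := by
          rw [← mul_pow]; norm_num
      _ = 2 ^ (k + 1) * (t k * S k) := by
          rw [htdef]; rw [div_mul_cancel₀ _ (hS0 k).ne']
      _ = ∑ n ∈ Finset.Ico (N k) (N (k + 1)), t k * ((c k) ^ r n * 2 ^ (k + 1)) := by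
          rw [hSdef]
          simp only
          rw [Finset.mul_sum, Finset.mul_sum]
          exact Finset.sum_congr rfl fun n _ => by ring
      _ ≤ _ := Finset.sum_le_sum hterm
  refine ⟨a, ha0, ?_, ?_⟩
  · -- q-sum ≤ 1
    rw [ENNReal.tsum_eq_iSup_sum]
    refine iSup_le fun s => ?_
    rw [← ENNReal.ofReal_sum_of_nonneg
      (fun n _ => Real.rpow_nonneg (ha0 n).le _)]
    refine ENNReal.ofReal_le_one.mpr ?_
    set m := s.sup id + 1 with hmdef
    have hsub : s ⊆ Finset.range (N m) := by
      intro n hn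
      refine Finset.mem_range.mpr ?_
      calc n ≤ s.sup id := Finset.le_sup (f := id) hn
        _ < m := Nat.lt_succ_self _
        _ ≤ N m := hNle m
    have hgeo : ∀ m', ∑ k ∈ Finset.range m', (1/2:ℝ) ^ (k + 1) = 1 - (1/2:ℝ) ^ m' := by
      intro m'
      induction m' with
      | zero => simp
      | succ m' ih => rw [Finset.sum_range_succ, ih]; ring
    calc ∑ n ∈ s, a n ^ q n
        ≤ ∑ n ∈ Finset.range (N m), a n ^ q n :=
          Finset.sum_le_sum_of_subset_of_nonneg hsub
            (fun n _ _ => Real.rpow_nonneg (ha0 n).le _)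
      _ = ∑ k ∈ Finset.range m, ∑ n ∈ Finset.Ico (N k) (N (k + 1)), a n ^ q n :=
          hrange _ m
      _ = ∑ k ∈ Finset.range m, (1/2:ℝ) ^ (k + 1) :=
          Finset.sum_congr rfl fun k _ => hblockq k
      _ = 1 - (1/2:ℝ) ^ m := hgeo m
      _ ≤ 1 := by
          have : (0:ℝ) ≤ (1/2:ℝ) ^ m := by positivity
          linarith
  · -- p-sum = ⊤
    by_contra hne
    obtain ⟨m, hm⟩ := ENNReal.exists_nat_gt hne
    have hreal : (m:ℝ) ≤ ∑ n ∈ Finset.range (N m), (a n / K) ^ p n := by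
      rw [hrange _ m]
      calc (m:ℝ) = ∑ _k ∈ Finset.range m, (1:ℝ) := by
            rw [Finset.sum_const, Finset.card_range]; simp
        _ ≤ _ := Finset.sum_le_sum fun k _ => hblockp k
    have hge : (m : ℝ≥0∞) ≤ ∑' n, ENNReal.ofReal ((a n / K) ^ p n) := by
      calc (m : ℝ≥0∞) = ENNReal.ofReal m := (ENNReal.ofReal_natCast m).symm
        _ ≤ ENNReal.ofReal (∑ n ∈ Finset.range (N m), (a n / K) ^ p n) :=
            ENNReal.ofReal_le_ofReal hreal
        _ = ∑ n ∈ Finset.range (N m), ENNReal.ofReal ((a n / K) ^ p n) :=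
            ENNReal.ofReal_sum_of_nonneg
              (fun n _ => Real.rpow_nonneg (div_nonneg (ha0 n).le hK0.le) _)
        _ ≤ ∑' n, ENNReal.ofReal ((a n / K) ^ p n) := ENNReal.sum_le_tsum _
    exact absurd hm (not_lt.mpr hge)
end

section
/- Let 0 < p_- ≤ p_n < q_n < ∞ for all n. Assume Σ_n c^{1/(1/p_n - 1/q_n)} = ∞ for all 0 < c < 1. Then there exists a single sequence (a_n) with a_n > 0 such that Σ_n a_n^{q_n} ≤ 1 and Σ_n (a_n/K)^{p_n} = ∞ for every K > 1; consequently a ∈ ℓ_{q_n} \ ℓ_{p_n} and ℓ_{q_n} does not embed into ℓ_{p_n}. -/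
open scoped ENNReal

lemma sum_Ico_blocks (m : ℕ → ℕ) (hm : Monotone m) (f : ℕ → ℝ≥0∞) (i : ℕ) :
    ∀ j, i ≤ j → ∑ n ∈ Finset.Ico (m i) (m j), f n
      = ∑ k ∈ Finset.Ico i j, ∑ n ∈ Finset.Ico (m k) (m (k+1)), f n := by
  intro j hj
  induction j, hj using Nat.le_induction with
  | base => simp
  | succ j hij ih =>
      rw [← Finset.sum_Ico_consecutive f (hm hij) (hm (Nat.le_succ j)),
          ih, Finset.sum_Ico_succ_top hij]

lemma exists_partial_ge (g : ℕ → ℝ) (hg0 : ∀ n, 0 ≤ g n) (hg1 : ∀ n, g n ≤ 1)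
    (htop : (∑' n, ENNReal.ofReal (g n)) = ⊤) (s : ℕ) :
    ∃ N, s < N ∧ 1 ≤ ∑ i ∈ Finset.Ico s N, g i ∧ ∑ i ∈ Finset.Ico s N, g i ≤ 2 := by
  have hex : ∃ N, 1 ≤ ∑ i ∈ Finset.Ico s N, g i := by
    by_contra h
    push_neg at h
    have hb : ∀ N, ∑ i ∈ Finset.range N, ENNReal.ofReal (g i)
        ≤ ENNReal.ofReal (∑ i ∈ Finset.range s, g i + 1) := by
      intro N
      rw [← ENNReal.ofReal_sum_of_nonneg (fun i _ => hg0 i)]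
      apply ENNReal.ofReal_le_ofReal
      rcases le_total N s with hNs | hsN
      · have h1 : ∑ i ∈ Finset.range N, g i ≤ ∑ i ∈ Finset.range s, g i :=
          Finset.sum_le_sum_of_subset_of_nonneg
            (Finset.range_subset_range.2 hNs) (fun i _ _ => hg0 i)
        linarith
      · have h2 : ∑ i ∈ Finset.range N, g i
            = ∑ i ∈ Finset.range s, g i + ∑ i ∈ Finset.Ico s N, g i := by
          rw [Finset.range_eq_Ico, Finset.range_eq_Ico, Finset.sum_Ico_consecutive g (Nat.zero_le s) hsN]
        have := (h N).le
        linarith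
    rw [ENNReal.tsum_eq_iSup_nat] at htop
    have := iSup_le hb
    rw [htop] at this
    exact ENNReal.ofReal_ne_top (top_le_iff.mp this)
  classical
  set N := Nat.find hex with hNdef
  have hPN : 1 ≤ ∑ i ∈ Finset.Ico s N, g i := Nat.find_spec hex
  have hsN : s < N := by
    by_contra h
    push_neg at h
    rw [Finset.Ico_eq_empty (by omega)] at hPN
    simp at hPN
    linarith
  refine ⟨N, hsN, hPN, ?_⟩
  have hN1 : N - 1 + 1 = N := by omega
  have hmin : ¬ 1 ≤ ∑ i ∈ Finset.Ico s (N-1), g i := Nat.find_min hex (by omega)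
  push_neg at hmin
  have hsplit : ∑ i ∈ Finset.Ico s N, g i
      = ∑ i ∈ Finset.Ico s (N-1), g i + g (N-1) := by
    conv_lhs => rw [← hN1]
    exact Finset.sum_Ico_succ_top (by omega) g
  have := hg1 (N-1)
  linarith [hsplit]

lemma exists_bad_seq (p q : ℕ → ℝ) (pm : ℝ) (hpm0 : 0 < pm) (hle : ∀ n, pm ≤ p n)
    (hpq : ∀ n, p n < q n)
    (hdiv : ∀ c : ℝ, 0 < c → c < 1 →
      (∑' n, ENNReal.ofReal (c ^ (1 / (1 / p n - 1 / q n)))) = ⊤) :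
    ∃ a : ℕ → ℝ, (∀ n, 0 < a n) ∧
      (∑' n, ENNReal.ofReal (a n ^ q n)) ≤ 1 ∧
      (∀ K : ℝ, 1 < K → (∑' n, ENNReal.ofReal ((a n / K) ^ p n)) = ⊤) := by
  classical
  have hp : ∀ n, 0 < p n := fun n => lt_of_lt_of_le hpm0 (hle n)
  have hq : ∀ n, 0 < q n := fun n => (hp n).trans (hpq n)
  set r : ℕ → ℝ := fun n => 1 / (1 / p n - 1 / q n) with hrdef
  have hdpos : ∀ n, 0 < 1 / p n - 1 / q n := by
    intro n
    have := one_div_lt_one_div_of_lt (hp n) (hpq n)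
    linarith
  have hrpos : ∀ n, 0 < r n := fun n => div_pos one_pos (hdpos n)
  -- block data
  set e : ℕ → ℝ := fun k => (k : ℝ) + 2 with hedef
  have he2 : ∀ k, (2:ℝ) ≤ e k := fun k => by
    simp only [hedef]; linarith [Nat.cast_nonneg (α := ℝ) k]
  have he0 : ∀ k, (0:ℝ) < e k := fun k => lt_of_lt_of_le two_pos (he2 k)
  set D : ℕ → ℝ := fun k => ((1:ℝ)/2) ^ (k+3) with hDdef
  have hD0 : ∀ k, (0:ℝ) < D k := fun k => by positivity
  have hD1 : ∀ k, D k ≤ 1 := fun k => by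
    simp only [hDdef]
    exact pow_le_one₀ (by norm_num) (by norm_num)
  set d : ℕ → ℝ := fun k => (D k) ^ (1/pm) with hddef
  have hd0 : ∀ k, (0:ℝ) < d k := fun k => Real.rpow_pos_of_pos (hD0 k) _
  have hd1 : ∀ k, d k ≤ 1 := fun k =>
    Real.rpow_le_one (hD0 k).le (hD1 k) (by positivity)
  have hdpm : ∀ k, d k ^ pm = D k := by
    intro k
    simp only [hddef]
    rw [← Real.rpow_mul (hD0 k).le, one_div_mul_cancel hpm0.ne', Real.rpow_one]
  set c : ℕ → ℝ := fun k => d k / e k with hcdef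
  have hc0 : ∀ k, (0:ℝ) < c k := fun k => div_pos (hd0 k) (he0 k)
  have hc1 : ∀ k, c k < 1 := fun k => by
    have h1 := hd1 k; have h2 := he2 k; have h3 := hd0 k
    rw [hcdef]
    rw [div_lt_one (he0 k)]
    linarith
  have hec : ∀ k, e k * c k = d k := fun k => by
    rw [hcdef]; field_simp; exact mul_div_cancel_left₀ (d k) (he0 k).ne'
  set g : ℕ → ℕ → ℝ := fun k n => c k ^ r n with hgdef
  have hg0 : ∀ k n, 0 ≤ g k n := fun k n => (Real.rpow_pos_of_pos (hc0 k) _).le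
  have hg1 : ∀ k n, g k n ≤ 1 := fun k n =>
    Real.rpow_le_one (hc0 k).le (hc1 k).le (hrpos n).le
  have htopk : ∀ k, (∑' n, ENNReal.ofReal (g k n)) = ⊤ := fun k =>
    hdiv (c k) (hc0 k) (hc1 k)
  have step : ∀ k s, ∃ N, s < N ∧ 1 ≤ ∑ i ∈ Finset.Ico s N, g k i
      ∧ ∑ i ∈ Finset.Ico s N, g k i ≤ 2 :=
    fun k s => exists_partial_ge (g k) (hg0 k) (hg1 k) (htopk k) s
  choose F hF1 hF2 hF3 using step
  set m : ℕ → ℕ := fun k => Nat.rec 0 (fun k mk => F k mk) k with hmdef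
  have hmsucc : ∀ k, m (k+1) = F k (m k) := fun k => rfl
  have hmlt : ∀ k, m k < m (k+1) := fun k => by
    rw [hmsucc]; exact hF1 k (m k)
  have hmono : StrictMono m := strictMono_nat_of_lt_succ hmlt
  have hklem : ∀ k, k ≤ m k := fun k => hmono.le_apply
  have hS1 : ∀ k, 1 ≤ ∑ n ∈ Finset.Ico (m k) (m (k+1)), g k n := fun k => by
    rw [hmsucc]; exact hF2 k (m k)
  have hS2 : ∀ k, ∑ n ∈ Finset.Ico (m k) (m (k+1)), g k n ≤ 2 := fun k => by
    rw [hmsucc]; exact hF3 k (m k)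
  -- block index
  have hidx : ∀ n, ∃ k, m k ≤ n ∧ n < m (k+1) := by
    intro n
    have h0 : m 0 ≤ n := by simp [hmdef]
    set k := Nat.findGreatest (fun k => m k ≤ n) n with hkdef
    have hk1 : m k ≤ n :=
      Nat.findGreatest_spec (P := fun k => m k ≤ n) (Nat.zero_le n) h0
    refine ⟨k, hk1, ?_⟩
    by_contra h
    push_neg at h
    have hkn : k + 1 ≤ n := le_trans (hklem (k+1)) h
    have := Nat.le_findGreatest (P := fun k => m k ≤ n) hkn h
    omega
  choose idx hidx1 hidx2 using hidx
  have huniq : ∀ k n, m k ≤ n → n < m (k+1) → idx n = k := by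
    intro k n h1 h2
    rcases lt_trichotomy (idx n) k with h | h | h
    · have : m (idx n + 1) ≤ m k := hmono.monotone h
      have := hidx2 n
      omega
    · exact h
    · have : m (k + 1) ≤ m (idx n) := hmono.monotone h
      have := hidx1 n
      omega
  set a : ℕ → ℝ := fun n => e (idx n) * c (idx n) ^ (r n / p n) with hadef
  have ha0 : ∀ n, 0 < a n := fun n =>
    mul_pos (he0 _) (Real.rpow_pos_of_pos (hc0 _) _)
  have hablock : ∀ k n, m k ≤ n → n < m (k+1) →
      a n = e k * c k ^ (r n / p n) := by
    intro k n h1 h2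
    simp only [hadef, huniq k n h1 h2]
  -- exponent identities
  have hexpq : ∀ n, r n / p n * q n = r n + q n := by
    intro n
    have h1 : p n ≠ 0 := (hp n).ne'
    have h2 : q n ≠ 0 := (hq n).ne'
    have h3 : 1 / p n - 1 / q n ≠ 0 := (hdpos n).ne'
    have h4 : q n - p n ≠ 0 := sub_ne_zero.2 (hpq n).ne'
    simp only [hrdef]
    field_simp
    ring
  have hexpp : ∀ n, r n / p n * p n = r n := fun n =>
    div_mul_cancel₀ _ (hp n).ne'
  -- key pointwise bounds
  have key_q : ∀ k n, m k ≤ n → n < m (k+1) → a n ^ q n ≤ D k * g k n := by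
    intro k n h1 h2
    rw [hablock k n h1 h2]
    have hcp : (0:ℝ) ≤ c k ^ (r n / p n) := (Real.rpow_pos_of_pos (hc0 k) _).le
    rw [Real.mul_rpow (he0 k).le hcp, ← Real.rpow_mul (hc0 k).le, hexpq n,
      Real.rpow_add (hc0 k)]
    have h5 : e k ^ q n * c k ^ q n = d k ^ q n := by
      rw [← Real.mul_rpow (he0 k).le (hc0 k).le, hec k]
    have h6 : d k ^ q n ≤ D k := by
      calc d k ^ q n ≤ d k ^ pm :=
            Real.rpow_le_rpow_of_exponent_ge (hd0 k) (hd1 k)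
              ((hle n).trans (hpq n).le)
        _ = D k := hdpm k
    have h7 : e k ^ q n * c k ^ q n ≤ D k := h5 ▸ h6
    have h8 : (0:ℝ) ≤ c k ^ r n := (Real.rpow_pos_of_pos (hc0 k) _).le
    calc e k ^ q n * (c k ^ r n * c k ^ q n)
        = (e k ^ q n * c k ^ q n) * c k ^ r n := by ring
      _ ≤ D k * c k ^ r n := mul_le_mul_of_nonneg_right h7 h8
      _ = D k * g k n := by simp only [hgdef]
  have key_p : ∀ (K : ℝ), 0 < K → ∀ k n, K ≤ e k → m k ≤ n → n < m (k+1) →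
      g k n ≤ (a n / K) ^ p n := by
    intro K hK k n hKe h1 h2
    rw [hablock k n h1 h2]
    have hdiv1 : e k * c k ^ (r n / p n) / K = (e k / K) * c k ^ (r n / p n) := by
      ring
    rw [hdiv1, Real.mul_rpow (by positivity) (Real.rpow_pos_of_pos (hc0 k) _).le,
      ← Real.rpow_mul (hc0 k).le, hexpp n]
    have h9 : 1 ≤ (e k / K) ^ p n :=
      Real.one_le_rpow ((one_le_div hK).2 hKe) (hp n).le
    have h10 : (0:ℝ) ≤ c k ^ r n := (Real.rpow_pos_of_pos (hc0 k) _).le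
    calc g k n = c k ^ r n := by simp only [hgdef]
      _ ≤ (e k / K) ^ p n * c k ^ r n := le_mul_of_one_le_left h10 h9
  refine ⟨a, ha0, ?_, ?_⟩
  · -- q-sum ≤ 1
    have geo : ∀ N, ∑ k ∈ Finset.range N, ((1:ℝ)/2) ^ (k+2) = 1/2 - (1/2)^(N+1) := by
      intro N
      induction N with
      | zero => norm_num
      | succ N ih => rw [Finset.sum_range_succ, ih]; ring
    have hblockq : ∀ k, ∑ n ∈ Finset.Ico (m k) (m (k+1)), ENNReal.ofReal (a n ^ q n)
        ≤ ENNReal.ofReal (((1:ℝ)/2) ^ (k+2)) := by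
      intro k
      rw [← ENNReal.ofReal_sum_of_nonneg
        (fun n _ => Real.rpow_nonneg (ha0 n).le _)]
      apply ENNReal.ofReal_le_ofReal
      have hb1 : ∑ n ∈ Finset.Ico (m k) (m (k+1)), a n ^ q n
          ≤ ∑ n ∈ Finset.Ico (m k) (m (k+1)), D k * g k n := by
        apply Finset.sum_le_sum
        intro n hn
        rw [Finset.mem_Ico] at hn
        exact key_q k n hn.1 hn.2
      have hb2 : ∑ n ∈ Finset.Ico (m k) (m (k+1)), D k * g k n
          = D k * ∑ n ∈ Finset.Ico (m k) (m (k+1)), g k n := by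
        rw [Finset.mul_sum]
      have hb3 : D k * ∑ n ∈ Finset.Ico (m k) (m (k+1)), g k n ≤ D k * 2 :=
        mul_le_mul_of_nonneg_left (hS2 k) (hD0 k).le
      have hb4 : D k * 2 = ((1:ℝ)/2) ^ (k+2) := by
        simp only [hDdef]; ring
      linarith [hb1, hb2 ▸ hb3]
    rw [ENNReal.tsum_eq_iSup_nat]
    apply iSup_le
    intro N
    have hsub : Finset.range N ⊆ Finset.range (m N) :=
      Finset.range_subset_range.2 (hklem N)
    calc ∑ n ∈ Finset.range N, ENNReal.ofReal (a n ^ q n)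
        ≤ ∑ n ∈ Finset.range (m N), ENNReal.ofReal (a n ^ q n) :=
          Finset.sum_le_sum_of_subset hsub
      _ = ∑ n ∈ Finset.Ico (m 0) (m N), ENNReal.ofReal (a n ^ q n) := by
          rw [Finset.range_eq_Ico]
          congr 1
      _ = ∑ k ∈ Finset.Ico 0 N, ∑ n ∈ Finset.Ico (m k) (m (k+1)),
            ENNReal.ofReal (a n ^ q n) :=
          sum_Ico_blocks m hmono.monotone _ 0 N (Nat.zero_le N)
      _ ≤ ∑ k ∈ Finset.Ico 0 N, ENNReal.ofReal (((1:ℝ)/2) ^ (k+2)) :=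
          Finset.sum_le_sum (fun k _ => hblockq k)
      _ = ENNReal.ofReal (∑ k ∈ Finset.range N, ((1:ℝ)/2) ^ (k+2)) := by
          rw [← Finset.range_eq_Ico,
            ENNReal.ofReal_sum_of_nonneg (fun k _ => by positivity)]
      _ ≤ 1 := by
          rw [geo N, ← ENNReal.ofReal_one]
          apply ENNReal.ofReal_le_ofReal
          have : (0:ℝ) ≤ (1/2)^(N+1) := by positivity
          linarith
  · -- p-sum = ⊤
    intro K hK
    by_contra hne
    obtain ⟨M, hM⟩ := ENNReal.exists_nat_gt hne
    have hKe : ∀ k, ⌈K⌉₊ ≤ k → K ≤ e k := by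
      intro k hk
      have h1 : K ≤ (⌈K⌉₊ : ℝ) := Nat.le_ceil K
      have h2 : ((⌈K⌉₊ : ℕ) : ℝ) ≤ (k : ℝ) := Nat.cast_le.2 hk
      simp only [hedef]
      linarith
    set k0 := ⌈K⌉₊ with hk0def
    have hblockp : ∀ k, k0 ≤ k →
        (1:ℝ≥0∞) ≤ ∑ n ∈ Finset.Ico (m k) (m (k+1)), ENNReal.ofReal ((a n / K) ^ p n) := by
      intro k hk
      rw [← ENNReal.ofReal_sum_of_nonneg (fun n _ => by
        have := ha0 n
        positivity)]
      rw [← ENNReal.ofReal_one]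
      apply ENNReal.ofReal_le_ofReal
      calc (1:ℝ) ≤ ∑ n ∈ Finset.Ico (m k) (m (k+1)), g k n := hS1 k
        _ ≤ ∑ n ∈ Finset.Ico (m k) (m (k+1)), (a n / K) ^ p n := by
            apply Finset.sum_le_sum
            intro n hn
            rw [Finset.mem_Ico] at hn
            exact key_p K (lt_trans one_pos hK) k n (hKe k hk) hn.1 hn.2
    have hlow : (M : ℝ≥0∞) ≤ ∑' n, ENNReal.ofReal ((a n / K) ^ p n) := by
      have h1 : (M : ℝ≥0∞) ≤ ∑ n ∈ Finset.Ico (m k0) (m (k0 + M)),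
          ENNReal.ofReal ((a n / K) ^ p n) := by
        rw [sum_Ico_blocks m hmono.monotone _ k0 (k0 + M) (Nat.le_add_right _ _)]
        calc (M : ℝ≥0∞) = ∑ _k ∈ Finset.Ico k0 (k0 + M), (1:ℝ≥0∞) := by
              rw [Finset.sum_const, Nat.card_Ico]
              simp
          _ ≤ _ := Finset.sum_le_sum (fun k hk => by
              rw [Finset.mem_Ico] at hk
              exact hblockp k hk.1)
      exact h1.trans (ENNReal.sum_le_tsum _)
    exact absurd hlow (not_le.2 hM)


theorem stmt_7 (p q : ℕ → ℝ) (pm : ℝ) (hpm0 : 0 < pm) (hle : ∀ n, pm ≤ p n)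
    (hpq : ∀ n, p n < q n)
    (hdiv : ∀ c : ℝ, 0 < c → c < 1 →
      (∑' n, ENNReal.ofReal (c ^ (1 / (1 / p n - 1 / q n)))) = ⊤) :
    (∃ a : ℕ → ℝ, (∀ n, 0 < a n) ∧
      (∑' n, ENNReal.ofReal (a n ^ q n)) ≤ 1 ∧
      (∀ K : ℝ, 1 < K → (∑' n, ENNReal.ofReal ((a n / K) ^ p n)) = ⊤) ∧
      vNorm q a ≠ ⊤ ∧ vNorm p a = ⊤) ∧
    ¬ ∃ C : ℝ, 0 < C ∧ ∀ b : ℕ → ℝ, vNorm p b ≤ ENNReal.ofReal C * vNorm q b := by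
  obtain ⟨a, ha0, haq, hap⟩ := exists_bad_seq p q pm hpm0 hle hpq hdiv
  have habs : ∀ n, |a n| = a n := fun n => abs_of_pos (ha0 n)
  have hvq : vNorm q a ≠ ⊤ := by
    have h1 : (1:ℝ≥0∞) ∈ {l : ℝ≥0∞ | 0 < l ∧ l ≠ ⊤ ∧
        (∑' n, ENNReal.ofReal ((|a n| / l.toReal) ^ q n)) ≤ 1} := by
      refine ⟨zero_lt_one, ENNReal.one_ne_top, ?_⟩
      simpa [habs, ENNReal.toReal_one] using haq
    have h2 : vNorm q a ≤ 1 := sInf_le h1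
    exact ne_top_of_le_ne_top ENNReal.one_ne_top h2
  have hvp : vNorm p a = ⊤ := by
    have hempty : {l : ℝ≥0∞ | 0 < l ∧ l ≠ ⊤ ∧
        (∑' n, ENNReal.ofReal ((|a n| / l.toReal) ^ p n)) ≤ 1} = ∅ := by
      rw [Set.eq_empty_iff_forall_notMem]
      rintro l ⟨hl0, hlt, hsum⟩
      have hlr : 0 < l.toReal := ENNReal.toReal_pos hl0.ne' hlt
      have hK := hap (l.toReal + 1) (by linarith)
      have hmono : (∑' n, ENNReal.ofReal ((a n / (l.toReal + 1)) ^ p n))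
          ≤ ∑' n, ENNReal.ofReal ((|a n| / l.toReal) ^ p n) := by
        apply ENNReal.tsum_le_tsum
        intro n
        apply ENNReal.ofReal_le_ofReal
        apply Real.rpow_le_rpow (div_nonneg (ha0 n).le (by linarith))
        · rw [habs n]
          exact div_le_div_of_nonneg_left (ha0 n).le hlr (by linarith)
        · exact (lt_of_lt_of_le hpm0 (hle n)).le
      rw [hK] at hmono
      have : (⊤ : ℝ≥0∞) ≤ 1 := hmono.trans hsum
      simp at this
    rw [vNorm, hempty, sInf_empty]
  refine ⟨⟨a, ha0, haq, hap, hvq, hvp⟩, ?_⟩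
  rintro ⟨C, hC, hall⟩
  have h1 := hall a
  rw [hvp, top_le_iff] at h1
  exact ENNReal.mul_ne_top ENNReal.ofReal_ne_top hvq h1
end

section
/- Let 0 < min(p_-, q_-) ≤ p_n, q_n ≤ ∞ for all n and let A = {n : p_n ≠ q_n}. Then the following are equivalent: (i) there exists 0 < c < 1 such that Σ_{n∈A} c^{1/|1/p_n - 1/q_n|} < ∞; (ii) the quasi-norms of ℓ_{p_n} and ℓ_{q_n} are equivalent. -/
open scoped ENNReal
set_option maxHeartbeats 2000000

/-- The modular of the variable Lebesgue sequence space with exponents in `(0,∞]`. -/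
noncomputable def vmod (p : ℕ → ℝ≥0∞) (a : ℕ → ℝ) : ℝ≥0∞ :=
  (∑' n, if p n ≠ ⊤ then ENNReal.ofReal (|a n| ^ (p n).toReal) else 0)
    + ⨆ n ∈ {n | p n = ⊤}, ENNReal.ofReal |a n|

/-- Luxemburg quasi-norm of `ℓ_{p_n}`, value `∞` when no admissible `λ` exists. -/
noncomputable def vNormE (p : ℕ → ℝ≥0∞) (a : ℕ → ℝ) : ℝ≥0∞ :=
  sInf {l : ℝ≥0∞ | 0 < l ∧ l ≠ ⊤ ∧ vmod p (fun n => a n / l.toReal) ≤ 1}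

lemma vmod_mono (p : ℕ → ℝ≥0∞) {a b : ℕ → ℝ} (h : ∀ n, |a n| ≤ |b n|) :
    vmod p a ≤ vmod p b := by
  unfold vmod
  refine add_le_add (ENNReal.tsum_le_tsum fun n => ?_) (iSup_mono fun n => iSup_mono fun _ =>
    ENNReal.ofReal_le_ofReal (h n))
  split
  · exact ENNReal.ofReal_le_ofReal (Real.rpow_le_rpow (abs_nonneg _) (h n) ENNReal.toReal_nonneg)
  · exact le_rfl

lemma vmod_div_mono (p : ℕ → ℝ≥0∞) (a : ℕ → ℝ) {s t : ℝ} (hs : 0 < s) (hst : s ≤ t) :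
    vmod p (fun n => a n / t) ≤ vmod p (fun n => a n / s) := by
  refine vmod_mono p fun n => ?_
  rw [abs_div, abs_div, abs_of_pos hs, abs_of_pos (lt_of_lt_of_le hs hst)]
  exact div_le_div_of_nonneg_left (abs_nonneg _) hs hst

lemma vNormE_le {p : ℕ → ℝ≥0∞} {a : ℕ → ℝ} {l : ℝ≥0∞} (h0 : 0 < l) (ht : l ≠ ⊤)
    (h : vmod p (fun n => a n / l.toReal) ≤ 1) : vNormE p a ≤ l :=
  sInf_le ⟨h0, ht, h⟩

lemma vmod_le_of_lt {p : ℕ → ℝ≥0∞} {a : ℕ → ℝ} {l : ℝ≥0∞} (hl : vNormE p a < l)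
    (hlt : l ≠ ⊤) : vmod p (fun n => a n / l.toReal) ≤ 1 := by
  obtain ⟨b, ⟨hb0, hbt, hb⟩, hbl⟩ := sInf_lt_iff.mp hl
  refine le_trans (vmod_div_mono p a (ENNReal.toReal_pos hb0.ne' hbt) ?_) hb
  exact (ENNReal.toReal_le_toReal hbt hlt).mpr hbl.le

lemma le_vNormE {p : ℕ → ℝ≥0∞} {a : ℕ → ℝ} {l : ℝ≥0∞} (hlt : l ≠ ⊤)
    (h : 1 < vmod p (fun n => a n / l.toReal)) : l ≤ vNormE p a := by
  refine le_sInf fun b ⟨hb0, hbt, hb⟩ => ?_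
  by_contra hc
  push_neg at hc
  exact absurd (le_trans (vmod_div_mono p a (ENNReal.toReal_pos hb0.ne' hbt)
    ((ENNReal.toReal_le_toReal hbt hlt).mpr hc.le)) hb) h.not_ge


lemma key_ineq {x lam P Q : ℝ} (hx : 0 ≤ x) (hlam : 1 ≤ lam) (hP : 0 < P) (hPQ : P < Q) :
    (x / lam) ^ P ≤ x ^ Q + lam ^ (-(P * Q / (Q - P))) := by
  have hlam0 : (0:ℝ) < lam := lt_of_lt_of_le one_pos hlam
  rcases le_or_gt ((x / lam) ^ P) (x ^ Q) with h | h
  · exact h.trans (le_add_of_nonneg_right (Real.rpow_nonneg hlam0.le _))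
  · refine le_trans ?_ (le_add_of_nonneg_left (Real.rpow_nonneg hx _))
    have hx0 : 0 < x := by
      rcases eq_or_lt_of_le hx with h0 | h0
      · exfalso
        rw [← h0, zero_div, Real.zero_rpow hP.ne', Real.zero_rpow (hP.trans hPQ).ne'] at h
        exact lt_irrefl 0 h
      · exact h0
    have hQP : 0 < Q - P := sub_pos.mpr hPQ
    have h1 : x ^ (Q - P) < lam ^ (-P) := by
      have hdiv : (x / lam) ^ P = x ^ P * lam ^ (-P) := by
        rw [div_eq_mul_inv, Real.mul_rpow hx (inv_nonneg.mpr hlam0.le),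
          Real.inv_rpow hlam0.le, ← Real.rpow_neg hlam0.le]
      have hsplit : x ^ Q = x ^ (Q - P) * x ^ P := by
        rw [← Real.rpow_add hx0]; ring_nf
      have hxP : 0 < x ^ P := Real.rpow_pos_of_pos hx0 _
      rw [hdiv, hsplit] at h
      exact lt_of_mul_lt_mul_right (by linarith [h]) hxP.le |>.trans_le le_rfl
    have h2 : x ≤ lam ^ (-P / (Q - P)) := by
      have hr := Real.rpow_le_rpow (Real.rpow_nonneg hx0.le _) h1.le
        (by positivity : (0:ℝ) ≤ (Q - P)⁻¹)
      rw [← Real.rpow_mul hx0.le, ← Real.rpow_mul hlam0.le,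
        mul_inv_cancel₀ hQP.ne', Real.rpow_one] at hr
      rw [div_eq_mul_inv]; exact hr
    have h3 : x / lam ≤ lam ^ (-(Q / (Q - P))) := by
      have : lam ^ (-(Q / (Q - P))) = lam ^ (-P / (Q - P)) / lam := by
        rw [eq_div_iff hlam0.ne', ← Real.rpow_add_one hlam0.ne']
        congr 1; field_simp; ring
      rw [this]
      gcongr
    calc (x / lam) ^ P ≤ (lam ^ (-(Q / (Q - P)))) ^ P :=
          Real.rpow_le_rpow (by positivity) h3 hP.le
      _ = lam ^ (-(P * Q / (Q - P))) := by
          rw [← Real.rpow_mul hlam0.le]; congr 1; ring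

lemma abs_le_one_of_vmod_le_one {q : ℕ → ℝ≥0∞} (hq0 : ∀ n, q n ≠ 0) {b : ℕ → ℝ}
    (h : vmod q b ≤ 1) : ∀ n, |b n| ≤ 1 := by
  intro n
  by_cases hqt : q n = ⊤
  · have h1 : ENNReal.ofReal |b n| ≤ vmod q b := by
      refine le_trans ?_ le_add_self
      exact le_biSup (fun i => ENNReal.ofReal |b i|) (show n ∈ {j | q j = ⊤} from hqt)
    exact ENNReal.ofReal_le_one.mp (h1.trans h)
  · have h1 : ENNReal.ofReal (|b n| ^ (q n).toReal) ≤ vmod q b := by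
      refine le_trans ?_ le_self_add
      have := ENNReal.le_tsum (f := fun i => if q i ≠ ⊤ then
        ENNReal.ofReal (|b i| ^ (q i).toReal) else 0) n
      rwa [if_pos hqt] at this
    have h2 : |b n| ^ (q n).toReal ≤ 1 := ENNReal.ofReal_le_one.mp (h1.trans h)
    by_contra hc
    push_neg at hc
    have : 1 < |b n| ^ (q n).toReal :=
      (Real.one_lt_rpow_iff_of_pos (lt_trans one_pos hc)).mpr
        (Or.inl ⟨hc, ENNReal.toReal_pos (hq0 n) hqt⟩)
    linarith

lemma embed (p q : ℕ → ℝ≥0∞) (m : ℝ) (hm0 : 0 < m)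
    (hmp : ∀ n, ENNReal.ofReal m ≤ p n) (hmq : ∀ n, ENNReal.ofReal m ≤ q n)
    (c : ℝ) (hc0 : 0 < c) (hc1 : c < 1)
    (hT : (∑' n : {n : ℕ | p n ≠ q n},
      ENNReal.ofReal (c ^ (1 / |((p n.1)⁻¹).toReal - ((q n.1)⁻¹).toReal|))) ≠ ⊤) :
    ∃ C : ℝ, 0 < C ∧ ∀ a : ℕ → ℝ, vNormE p a ≤ ENNReal.ofReal C * vNormE q a := by
  have hofm : (0:ℝ≥0∞) < ENNReal.ofReal m := ENNReal.ofReal_pos.mpr hm0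
  have hp0 : ∀ n, p n ≠ 0 := fun n => (lt_of_lt_of_le hofm (hmp n)).ne'
  have hq0 : ∀ n, q n ≠ 0 := fun n => (lt_of_lt_of_le hofm (hmq n)).ne'
  have hmP : ∀ n, p n ≠ ⊤ → m ≤ (p n).toReal := by
    intro n hn
    have := (ENNReal.toReal_le_toReal ENNReal.ofReal_ne_top hn).mpr (hmp n)
    rwa [ENNReal.toReal_ofReal hm0.le] at this
  have hmQ : ∀ n, q n ≠ ⊤ → m ≤ (q n).toReal := by
    intro n hn
    have := (ENNReal.toReal_le_toReal ENNReal.ofReal_ne_top hn).mpr (hmq n)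
    rwa [ENNReal.toReal_ofReal hm0.le] at this
  set d : ℕ → ℝ := fun n => |((p n)⁻¹).toReal - ((q n)⁻¹).toReal| with hd_def
  set A : Set ℕ := {n | p n ≠ q n} with hA_def
  -- inverse toReal bounds
  have hinv : ∀ r : ℕ → ℝ≥0∞, (∀ n, ENNReal.ofReal m ≤ r n) → ∀ n,
      ((r n)⁻¹).toReal ≤ 1 / m := by
    intro r hr n
    have h1 : (r n)⁻¹ ≤ (ENNReal.ofReal m)⁻¹ := ENNReal.inv_le_inv.mpr (hr n)
    have hrn0 : r n ≠ 0 := (lt_of_lt_of_le hofm (hr n)).ne'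
    have h2 := (ENNReal.toReal_le_toReal (ENNReal.inv_ne_top.mpr hrn0)
      (ENNReal.inv_ne_top.mpr hofm.ne')).mpr h1
    calc ((r n)⁻¹).toReal ≤ ((ENNReal.ofReal m)⁻¹).toReal := h2
      _ = 1 / m := by rw [ENNReal.toReal_inv, ENNReal.toReal_ofReal hm0.le, one_div]
  have hd_le : ∀ n, d n ≤ 1 / m := by
    intro n
    rw [hd_def, abs_sub_le_iff]
    constructor
    · linarith [hinv p hmp n, ENNReal.toReal_nonneg (a := (q n)⁻¹)]
    · linarith [hinv q hmq n, ENNReal.toReal_nonneg (a := (p n)⁻¹)]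
  have hd_pos : ∀ n ∈ A, 0 < d n := by
    intro n hn
    rw [hd_def, abs_pos, sub_ne_zero]
    intro heq
    have h1 : (p n)⁻¹ = (q n)⁻¹ := by
      have hpt : (p n)⁻¹ ≠ ⊤ := by simp [ENNReal.inv_ne_top, hp0 n]
      have hqt : (q n)⁻¹ ≠ ⊤ := by simp [ENNReal.inv_ne_top, hq0 n]
      exact (ENNReal.toReal_eq_toReal_iff' hpt hqt).mp heq
    exact hn (by simpa using congrArg (·⁻¹) h1)
  have hd_inv : ∀ n ∈ A, m ≤ 1 / d n := by
    intro n hn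
    have := one_div_le_one_div_of_le (hd_pos n hn) (hd_le n)
    rwa [one_div_one_div] at this
  -- constants
  set ρ : ℝ := c ^ m with hρ_def
  have hρ0 : 0 < ρ := Real.rpow_pos_of_pos hc0 m
  have hρ1 : ρ < 1 := Real.rpow_lt_one hc0.le hc1 hm0
  set T : ℝ := (∑' n : A, ENNReal.ofReal (c ^ (1 / d n.1))).toReal with hT_def
  have hT0 : 0 ≤ T := ENNReal.toReal_nonneg
  obtain ⟨k, hk⟩ := exists_pow_lt_of_lt_one (show (0:ℝ) < 1/(T+1) by positivity) hρ1
  set lam1 : ℝ := c ^ (-(k+1 : ℝ)) with hlam1_def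
  have hlam1 : 1 ≤ lam1 :=
    Real.one_le_rpow_of_pos_of_le_one_of_nonpos hc0 hc1.le (neg_nonpos.mpr (by positivity))
  have hlam1_0 : 0 < lam1 := lt_of_lt_of_le one_pos hlam1
  set lam2 : ℝ := max 2 ((4:ℝ) ^ (1/m)) with hlam2_def
  have hlam2_2 : (2:ℝ) ≤ lam2 := le_max_left _ _
  have hlam2_1 : (1:ℝ) ≤ lam2 := by linarith
  have hlam2_0 : (0:ℝ) < lam2 := by linarith
  have hlam2_m : (4:ℝ) ≤ lam2 ^ m := by
    calc (4:ℝ) = ((4:ℝ) ^ (1/m)) ^ m := by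
          rw [← Real.rpow_mul (by norm_num : (0:ℝ) ≤ 4), one_div,
            inv_mul_cancel₀ hm0.ne', Real.rpow_one]
      _ ≤ lam2 ^ m := Real.rpow_le_rpow (Real.rpow_nonneg (by norm_num) _)
          (le_max_right _ _) hm0.le
  have hlam2_m0 : (0:ℝ) < lam2 ^ m := by positivity
  have hlam1_bound : ∀ r : ℝ, m ≤ r → (1/lam1) ^ r ≤ c ^ r * ρ ^ k := by
    intro r hr
    have h1 : (1/lam1 : ℝ) = c ^ ((k+1 : ℝ)) := by
      rw [hlam1_def, one_div, ← Real.rpow_neg hc0.le, neg_neg]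
    rw [h1, ← Real.rpow_mul hc0.le]
    have h2 : (k+1 : ℝ) * r = r + (k:ℝ)*r := by ring
    rw [h2, Real.rpow_add hc0]
    have h3 : c ^ ((k:ℝ)*r) ≤ ρ ^ k := by
      have : c ^ ((k:ℝ)*r) ≤ c ^ (m*(k:ℝ)) := by
        apply Real.rpow_le_rpow_of_exponent_ge hc0 hc1.le
        have : (0:ℝ) ≤ (k:ℝ) := Nat.cast_nonneg k
        nlinarith
      calc c ^ ((k:ℝ)*r) ≤ c ^ (m*(k:ℝ)) := this
        _ = ρ ^ k := by rw [Real.rpow_mul hc0.le, hρ_def, Real.rpow_natCast]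
    exact mul_le_mul_of_nonneg_left h3 (Real.rpow_nonneg hc0.le r)
  have hlam2_bound : ∀ r : ℝ, m ≤ r → (1/lam2 : ℝ) ^ r ≤ 1 / lam2 ^ m := by
    intro r hr
    rw [Real.div_rpow zero_le_one hlam2_0.le, Real.one_rpow]
    exact one_div_le_one_div_of_le hlam2_m0
      (Real.rpow_le_rpow_of_exponent_le hlam2_1 hr)
  set Lam : ℝ := lam1 * lam2 with hLam_def
  have hLam1 : 1 ≤ Lam := by nlinarith
  have hLam2 : 2 ≤ Lam := by
    calc (2:ℝ) ≤ lam2 := hlam2_2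
      _ = 1 * lam2 := (one_mul _).symm
      _ ≤ lam1 * lam2 := by nlinarith
  have hLam0 : 0 < Lam := by linarith
  refine ⟨Lam, hLam0, fun a => ?_⟩
  have hstep : ∀ l : ℝ≥0∞, vNormE q a < l → l ≠ ⊤ →
      vNormE p a ≤ ENNReal.ofReal Lam * l := by
    intro l hl hlt
    have hl0 : l ≠ 0 := (lt_of_le_of_lt zero_le hl).ne'
    have hmodq : vmod q (fun n => a n / l.toReal) ≤ 1 := vmod_le_of_lt hl hlt
    set L := l.toReal with hL_def
    have hL0 : 0 < L := ENNReal.toReal_pos hl0 hlt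
    set b : ℕ → ℝ := fun n => a n / L with hb_def
    have hb1 : ∀ n, |b n| ≤ 1 := abs_le_one_of_vmod_le_one hq0 hmodq
    refine vNormE_le (l := ENNReal.ofReal Lam * l) ?_ ?_ ?_
    · exact ENNReal.mul_pos (ENNReal.ofReal_pos.mpr hLam0).ne' hl0
    · exact ENNReal.mul_ne_top ENNReal.ofReal_ne_top hlt
    · have htoReal : (ENNReal.ofReal Lam * l).toReal = Lam * L := by
        rw [ENNReal.toReal_mul, ENNReal.toReal_ofReal hLam0.le]
      rw [htoReal]
      have hfun : (fun n => a n / (Lam * L)) = fun n => b n / Lam := by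
        funext n
        rw [hb_def]
        rw [div_div, mul_comm]
      rw [hfun]
      -- core modular estimate
      set G : ℕ → ℝ≥0∞ := fun n =>
        if q n ≠ ⊤ then ENNReal.ofReal (|b n| ^ (q n).toReal) else 0 with hG_def
      set H : ℕ → ℝ≥0∞ :=
        fun n => Set.indicator A (fun j => ENNReal.ofReal (c ^ (1 / d j) * ρ ^ k)) n
        with hH_def
      have hpoint : ∀ n, (if p n ≠ ⊤ then
          ENNReal.ofReal (|b n / Lam| ^ (p n).toReal) else 0)
          ≤ ENNReal.ofReal (1 / lam2 ^ m) * (G n + H n) := by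
        intro n
        by_cases hpt : p n = ⊤
        · rw [if_neg (by simpa using hpt)]
          exact zero_le
        · rw [if_pos hpt]
          set P := (p n).toReal with hP_def
          have hP0 : 0 < P := ENNReal.toReal_pos (hp0 n) hpt
          have hPm : m ≤ P := hmP n hpt
          have habs : |b n / Lam| = |b n| / Lam := by
            rw [abs_div, abs_of_pos hLam0]
          set x := |b n| with hx_def
          have hx0 : 0 ≤ x := abs_nonneg _
          have hx1 : x ≤ 1 := hb1 n
          rw [habs]
          by_cases hqt : q n = ⊤
          · -- q n = ∞, p n finite
            have hnA : n ∈ A := fun h => hpt (h.trans hqt)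
            have hdn : 1 / d n = P := by
              show 1 / |((p n)⁻¹).toReal - ((q n)⁻¹).toReal| = P
              rw [hqt, ENNReal.inv_top, ENNReal.toReal_zero, sub_zero,
                ENNReal.toReal_inv, abs_of_nonneg (by positivity), one_div, inv_inv]
            have hG0 : G n = 0 := if_neg (by simpa using hqt)
            have hH0 : H n = ENNReal.ofReal (c ^ (1 / d n) * ρ ^ k) :=
              Set.indicator_of_mem hnA _
            rw [hG0, hH0, zero_add, ← ENNReal.ofReal_mul (by positivity)]
            apply ENNReal.ofReal_le_ofReal
            rw [hdn]
            have h1 : (x / Lam) ^ P ≤ (1/lam1) ^ P * (1/lam2) ^ P := by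
              have h2 : x / Lam ≤ (1/lam1) * (1/lam2) := by
                rw [one_div_mul_one_div, hLam_def]
                gcongr
              calc (x / Lam) ^ P ≤ ((1/lam1) * (1/lam2)) ^ P :=
                    Real.rpow_le_rpow (by positivity) h2 hP0.le
                _ = (1/lam1) ^ P * (1/lam2) ^ P :=
                    Real.mul_rpow (by positivity) (by positivity)
            calc (x / Lam) ^ P ≤ (1/lam1) ^ P * (1/lam2) ^ P := h1
              _ ≤ (c ^ P * ρ ^ k) * (1 / lam2 ^ m) :=
                  mul_le_mul (hlam1_bound P hPm) (hlam2_bound P hPm)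
                    (by positivity) (by positivity)
              _ = 1 / lam2 ^ m * (c ^ P * ρ ^ k) := by ring
          · -- q n finite
            set Q := (q n).toReal with hQ_def
            have hQ0 : 0 < Q := ENNReal.toReal_pos (hq0 n) hqt
            have hQm : m ≤ Q := hmQ n hqt
            have hGn : G n = ENNReal.ofReal (x ^ Q) := if_pos hqt
            rcases le_or_gt Q P with hQP | hPQ
            · -- case P ≥ Q
              have hreal : (x / Lam) ^ P ≤ 1 / lam2 ^ m * x ^ Q := by
                have hxPQ : x ^ P ≤ x ^ Q := by
                  rcases eq_or_lt_of_le hx0 with h0 | h0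
                  · rw [← h0, Real.zero_rpow hP0.ne', Real.zero_rpow hQ0.ne']
                  · exact Real.rpow_le_rpow_of_exponent_ge h0 hx1 hQP
                have hLamP : lam2 ^ m ≤ Lam ^ P := by
                  calc lam2 ^ m ≤ lam2 ^ P := Real.rpow_le_rpow_of_exponent_le hlam2_1 hPm
                    _ ≤ Lam ^ P := Real.rpow_le_rpow hlam2_0.le (by nlinarith) hP0.le
                calc (x / Lam) ^ P = x ^ P / Lam ^ P := Real.div_rpow hx0 hLam0.le P
                  _ ≤ x ^ Q / lam2 ^ m :=
                      div_le_div₀ (by positivity) hxPQ hlam2_m0 hLamP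
                  _ = 1 / lam2 ^ m * x ^ Q := by ring
              calc ENNReal.ofReal ((x/Lam) ^ P) ≤
                    ENNReal.ofReal (1 / lam2 ^ m * x ^ Q) := ENNReal.ofReal_le_ofReal hreal
                _ = ENNReal.ofReal (1/lam2 ^ m) * ENNReal.ofReal (x ^ Q) :=
                    ENNReal.ofReal_mul (by positivity)
                _ ≤ ENNReal.ofReal (1/lam2 ^ m) * (G n + H n) := by
                    rw [hGn]; exact mul_le_mul_right le_self_add _
            · -- case P < Q : Young
              have hnA : n ∈ A := by
                intro h
                exact absurd (congrArg ENNReal.toReal h) hPQ.ne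
              have hinvlt : Q⁻¹ < P⁻¹ := by
                exact inv_strictAnti₀ hP0 hPQ
              have hdn : d n = P⁻¹ - Q⁻¹ := by
                show |((p n)⁻¹).toReal - ((q n)⁻¹).toReal| = P⁻¹ - Q⁻¹
                rw [ENNReal.toReal_inv, ENNReal.toReal_inv]
                exact abs_of_pos (by linarith)
              have hd1 : 1 / d n = P * Q / (Q - P) := by
                rw [hdn]
                have h4 : P⁻¹ - Q⁻¹ = (Q - P)/(P*Q) := by
                  field_simp
                rw [h4, one_div_div]
              have hdm : m ≤ P * Q / (Q - P) := by
                rw [← hd1]; exact hd_inv n hnA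
              have hkey := key_ineq hx0 hlam1 hP0 hPQ
              have hlam1v : lam1 ^ (-(P * Q / (Q - P))) ≤ c ^ (1/d n) * ρ ^ k := by
                have h5 : lam1 ^ (-(P * Q / (Q - P))) = (1/lam1) ^ (P * Q / (Q - P)) := by
                  rw [Real.rpow_neg hlam1_0.le, one_div, Real.inv_rpow hlam1_0.le]
                rw [h5, hd1]
                exact hlam1_bound _ hdm
              have hreal : (x / Lam) ^ P ≤
                  1 / lam2 ^ m * (x ^ Q + c ^ (1/d n) * ρ ^ k) := by
                have h6 : (x / Lam) ^ P = (x / lam1) ^ P / lam2 ^ P := by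
                  rw [hLam_def, ← div_div, Real.div_rpow (by positivity) hlam2_0.le P]
                have h7 : lam2 ^ m ≤ lam2 ^ P :=
                  Real.rpow_le_rpow_of_exponent_le hlam2_1 hPm
                calc (x / Lam) ^ P = (x / lam1) ^ P / lam2 ^ P := h6
                  _ ≤ (x ^ Q + lam1 ^ (-(P * Q / (Q - P)))) / lam2 ^ m :=
                      div_le_div₀ (by positivity) hkey hlam2_m0 h7
                  _ ≤ (x ^ Q + c ^ (1/d n) * ρ ^ k) / lam2 ^ m := by
                      gcongr
                  _ = 1 / lam2 ^ m * (x ^ Q + c ^ (1/d n) * ρ ^ k) := by ring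
              calc ENNReal.ofReal ((x/Lam) ^ P) ≤
                    ENNReal.ofReal (1 / lam2 ^ m * (x ^ Q + c ^ (1/d n) * ρ ^ k)) :=
                      ENNReal.ofReal_le_ofReal hreal
                _ = ENNReal.ofReal (1/lam2 ^ m) *
                    (ENNReal.ofReal (x ^ Q) + ENNReal.ofReal (c ^ (1/d n) * ρ ^ k)) := by
                      rw [ENNReal.ofReal_mul (by positivity),
                        ENNReal.ofReal_add (by positivity) (by positivity)]
                _ ≤ ENNReal.ofReal (1/lam2 ^ m) * (G n + H n) := by
                      have hHn : H n = ENNReal.ofReal (c ^ (1 / d n) * ρ ^ k) :=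
                        Set.indicator_of_mem hnA _
                      rw [hGn, hHn]
      have hGsum : (∑' n, G n) ≤ 1 := by
        have hv : vmod q b = (∑' n, G n) + ⨆ n ∈ {n | q n = ⊤}, ENNReal.ofReal |b n| := rfl
        calc (∑' n, G n) ≤ vmod q b := by rw [hv]; exact le_self_add
          _ ≤ 1 := hmodq
      have hHsum : (∑' n, H n) ≤ 1 := by
        have h1 : (∑' n, H n) = ∑' (n : A), ENNReal.ofReal (c ^ (1 / d n.1) * ρ ^ k) :=
          (tsum_subtype A _).symm
        have h2 : ∀ n : A, ENNReal.ofReal (c ^ (1 / d n.1) * ρ ^ k)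
            = ENNReal.ofReal (ρ ^ k) * ENNReal.ofReal (c ^ (1 / d n.1)) := by
          intro n; rw [← ENNReal.ofReal_mul (by positivity), mul_comm]
        rw [h1, tsum_congr h2, ENNReal.tsum_mul_left]
        have h3 : (∑' (n : A), ENNReal.ofReal (c ^ (1 / d n.1))) = ENNReal.ofReal T :=
          (ENNReal.ofReal_toReal hT).symm
        rw [h3, ← ENNReal.ofReal_mul (by positivity)]
        refine ENNReal.ofReal_le_one.mpr ?_
        have h4 : ρ ^ k * T ≤ (1/(T+1)) * T := by nlinarith [pow_nonneg hρ0.le k]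
        have h5 : (1/(T+1)) * T ≤ 1 := by
          rw [div_mul_eq_mul_div, one_mul, div_le_one (by linarith)]
          linarith
        linarith
      have hsum : (∑' n, if p n ≠ ⊤ then ENNReal.ofReal (|b n / Lam| ^ (p n).toReal) else 0)
          ≤ ENNReal.ofReal (1/2) := by
        calc _ ≤ ∑' n, ENNReal.ofReal (1 / lam2 ^ m) * (G n + H n) :=
              ENNReal.tsum_le_tsum hpoint
          _ = ENNReal.ofReal (1 / lam2 ^ m) * ((∑' n, G n) + (∑' n, H n)) := by
              rw [ENNReal.tsum_mul_left, ENNReal.tsum_add]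
          _ ≤ ENNReal.ofReal (1 / lam2 ^ m) * (1 + 1) := by gcongr
          _ = ENNReal.ofReal (1 / lam2 ^ m) * ENNReal.ofReal 2 := by
              norm_num [ENNReal.ofReal_ofNat]
          _ = ENNReal.ofReal (1 / lam2 ^ m * 2) := (ENNReal.ofReal_mul (by positivity)).symm
          _ ≤ ENNReal.ofReal (1/2) := ENNReal.ofReal_le_ofReal (by
              rw [div_mul_eq_mul_div, one_mul, div_le_div_iff₀ hlam2_m0 two_pos]
              nlinarith)
      have hsup : (⨆ n ∈ {n | p n = ⊤}, ENNReal.ofReal |b n / Lam|) ≤ ENNReal.ofReal (1/2) := by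
        refine iSup₂_le fun n hn => ENNReal.ofReal_le_ofReal ?_
        rw [abs_div, abs_of_pos hLam0]
        exact div_le_div₀ (by norm_num) (hb1 n) two_pos hLam2
      show (∑' n, if p n ≠ ⊤ then ENNReal.ofReal (|b n / Lam| ^ (p n).toReal) else 0)
          + (⨆ n ∈ {n | p n = ⊤}, ENNReal.ofReal |b n / Lam|) ≤ 1
      calc _ ≤ ENNReal.ofReal (1/2) + ENNReal.ofReal (1/2) := add_le_add hsum hsup
        _ = 1 := by rw [← ENNReal.ofReal_add (by norm_num) (by norm_num)]; norm_num
  rcases eq_or_ne (vNormE q a) ⊤ with hNt | hNt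
  · rw [hNt, ENNReal.mul_top (ENNReal.ofReal_pos.mpr hLam0).ne']
    exact le_top
  · by_contra hcon
    push_neg at hcon
    have hL0' : ENNReal.ofReal Lam ≠ 0 := (ENNReal.ofReal_pos.mpr hLam0).ne'
    have hLt' : ENNReal.ofReal Lam ≠ ⊤ := ENNReal.ofReal_ne_top
    have h1 : vNormE q a < vNormE p a / ENNReal.ofReal Lam := by
      rw [ENNReal.lt_div_iff_mul_lt (Or.inl hL0') (Or.inl hLt')]
      rwa [mul_comm] at hcon
    obtain ⟨l, hl1, hl2⟩ := exists_between h1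
    have h2 := hstep l hl1 (hl2.trans_le le_top).ne
    have h3 : vNormE p a / ENNReal.ofReal Lam ≤ l := by
      rw [ENNReal.div_le_iff_le_mul (Or.inl hL0') (Or.inl hLt'), mul_comm]
      exact h2
    exact absurd (lt_of_lt_of_le hl2 h3) (lt_irrefl l)

lemma blowup (p q : ℕ → ℝ≥0∞) (m : ℝ) (hm0 : 0 < m)
    (hmp : ∀ n, ENNReal.ofReal m ≤ p n) (hmq : ∀ n, ENNReal.ofReal m ≤ q n)
    (c : ℝ) (hc0 : 0 < c) (hc1 : c < 1)
    (hB : (∑' n : {n : ℕ | ((q n)⁻¹).toReal < ((p n)⁻¹).toReal},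
      ENNReal.ofReal (c ^ (1 / |((p n.1)⁻¹).toReal - ((q n.1)⁻¹).toReal|))) = ⊤) :
    ∃ a : ℕ → ℝ, vNormE q a ≤ 1 ∧
      ENNReal.ofReal ((2:ℝ) ^ (-(1 + 1/m)) / (2*c)) ≤ vNormE p a := by
  have hofm : (0:ℝ≥0∞) < ENNReal.ofReal m := ENNReal.ofReal_pos.mpr hm0
  have hp0 : ∀ n, p n ≠ 0 := fun n => (lt_of_lt_of_le hofm (hmp n)).ne'
  have hq0 : ∀ n, q n ≠ 0 := fun n => (lt_of_lt_of_le hofm (hmq n)).ne'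
  have hmP : ∀ n, p n ≠ ⊤ → m ≤ (p n).toReal := by
    intro n hn
    have := (ENNReal.toReal_le_toReal ENNReal.ofReal_ne_top hn).mpr (hmp n)
    rwa [ENNReal.toReal_ofReal hm0.le] at this
  have hmQ : ∀ n, q n ≠ ⊤ → m ≤ (q n).toReal := by
    intro n hn
    have := (ENNReal.toReal_le_toReal ENNReal.ofReal_ne_top hn).mpr (hmq n)
    rwa [ENNReal.toReal_ofReal hm0.le] at this
  set d : ℕ → ℝ := fun n => |((p n)⁻¹).toReal - ((q n)⁻¹).toReal| with hd_def
  set B : Set ℕ := {n | ((q n)⁻¹).toReal < ((p n)⁻¹).toReal} with hB_def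
  have hBp : ∀ n ∈ B, p n ≠ ⊤ := by
    intro n hn ht
    rw [hB_def, Set.mem_setOf_eq, ht, ENNReal.inv_top, ENNReal.toReal_zero] at hn
    exact absurd hn (not_lt.mpr ENNReal.toReal_nonneg)
  have hd_pos : ∀ n ∈ B, d n = ((p n)⁻¹).toReal - ((q n)⁻¹).toReal ∧ 0 < d n := by
    intro n hn
    rw [hB_def, Set.mem_setOf_eq] at hn
    constructor
    · exact abs_of_pos (by linarith)
    · rw [hd_def]; simp only []; rw [abs_of_pos (by linarith : (0:ℝ) < _)]; linarith
  -- extract a finite set with large sum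
  have h1 : (1:ℝ≥0∞) < ⨆ s : Finset B, ∑ i ∈ s, ENNReal.ofReal (c ^ (1 / d i.1)) := by
    rw [← ENNReal.tsum_eq_iSup_sum]
    rw [hB]
    exact ENNReal.one_lt_top
  obtain ⟨s, hs⟩ := lt_iSup_iff.mp h1
  set F : Finset ℕ := s.image Subtype.val with hF_def
  have hFB : ∀ n ∈ F, n ∈ B := by
    intro n hn
    obtain ⟨i, _, rfl⟩ := Finset.mem_image.mp hn
    exact i.2
  set S : ℝ := ∑ n ∈ F, c ^ (1 / d n) with hS_def
  have hSos : (∑ i ∈ s, ENNReal.ofReal (c ^ (1 / d i.1))) = ENNReal.ofReal S := by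
    rw [hS_def, ENNReal.ofReal_sum_of_nonneg (fun i _ => by positivity), hF_def,
      Finset.sum_image (fun a _ b _ h => Subtype.val_injective h)]
  have hS1 : 1 < S := by
    by_contra hcon
    push_neg at hcon
    rw [hSos] at hs
    exact absurd (le_trans (ENNReal.ofReal_le_one.mpr hcon) le_rfl) (not_le.mpr hs)
  have hS0 : 0 < S := by linarith
  -- epsilon
  set ε : ℝ := (2:ℝ) ^ (-(1 + 1/m)) with hε_def
  have hε0 : 0 < ε := Real.rpow_pos_of_pos two_pos _
  have hε_half : ε ≤ 1/2 := by
    have h2 : ε ≤ (2:ℝ) ^ (-1 : ℝ) := by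
      apply Real.rpow_le_rpow_of_exponent_le one_le_two
      have : 0 < 1/m := by positivity
      linarith
    rwa [Real.rpow_neg_one, ← one_div] at h2
  have hε1 : ε ≤ 1 := by linarith
  have hεm : ε ^ m ≤ 1/2 := by
    have h3 : ε ^ m = (2:ℝ) ^ (-(1 + 1/m) * m) := by
      rw [hε_def, ← Real.rpow_mul (by norm_num : (0:ℝ) ≤ 2)]
    have h4 : -(1 + 1/m) * m = -(m + 1) := by field_simp
    have h5 : ((2:ℝ) ^ (-(m+1))) ≤ (2:ℝ) ^ (-1:ℝ) :=
      Real.rpow_le_rpow_of_exponent_le one_le_two (by linarith)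
    rw [h3, h4]
    rwa [Real.rpow_neg_one, ← one_div] at h5
  -- the witness sequence
  set a : ℕ → ℝ := fun n =>
    if n ∈ F then ε * (c ^ (1 / d n) / S) ^ ((q n)⁻¹).toReal else 0 with ha_def
  have ha0 : ∀ n, 0 ≤ a n := by
    intro n
    simp only [ha_def]
    split
    · positivity
    · exact le_rfl
  have haε : ∀ n, a n ≤ ε := by
    intro n
    simp only [ha_def]
    split
    · have hy1 : c ^ (1 / d n) / S ≤ 1 := by
        have : c ^ (1 / d n) ≤ 1 :=
          Real.rpow_le_one hc0.le hc1.le (by positivity)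
        rw [div_le_one hS0]; linarith
      calc ε * (c ^ (1 / d n) / S) ^ ((q n)⁻¹).toReal
          ≤ ε * 1 := by
            apply mul_le_mul_of_nonneg_left _ hε0.le
            exact Real.rpow_le_one (by positivity) hy1 ENNReal.toReal_nonneg
        _ = ε := mul_one ε
    · exact hε0.le
  refine ⟨a, ?_, ?_⟩
  · -- upper bound for the q-norm
    apply vNormE_le (zero_lt_one) ENNReal.one_ne_top
    have hfun : (fun n => a n / (1:ℝ≥0∞).toReal) = a := by
      funext n; rw [ENNReal.toReal_one, div_one]
    rw [hfun]
    have hzero : ∀ n ∉ F,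
        (if q n ≠ ⊤ then ENNReal.ofReal (|a n| ^ (q n).toReal) else 0) = 0 := by
      intro n hn
      have han : a n = 0 := by simp only [ha_def]; rw [if_neg hn]
      split
      · rename_i hqt
        rw [han, abs_zero, Real.zero_rpow (ENNReal.toReal_pos (hq0 n) hqt).ne',
          ENNReal.ofReal_zero]
      · rfl
    have hsum : (∑' n, if q n ≠ ⊤ then ENNReal.ofReal (|a n| ^ (q n).toReal) else 0)
        ≤ ENNReal.ofReal (1/2) := by
      rw [tsum_eq_sum hzero]
      have hterm : ∀ n ∈ F, (if q n ≠ ⊤ then ENNReal.ofReal (|a n| ^ (q n).toReal) else 0)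
          ≤ ENNReal.ofReal (c ^ (1 / d n) / S / 2) := by
        intro n hn
        split
        · rename_i hqt
          apply ENNReal.ofReal_le_ofReal
          set Q := (q n).toReal with hQ_def
          have hQ0 : 0 < Q := ENNReal.toReal_pos (hq0 n) hqt
          have hQm : m ≤ Q := hmQ n hqt
          have han : a n = ε * (c ^ (1 / d n) / S) ^ Q⁻¹ := by
            simp only [ha_def]; rw [if_pos hn, ENNReal.toReal_inv]
          have hy0 : (0:ℝ) ≤ c ^ (1 / d n) / S := by positivity
          have hyy : ((c ^ (1 / d n) / S) ^ (Q⁻¹ : ℝ)) ^ Q = c ^ (1 / d n) / S := by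
            rw [← Real.rpow_mul hy0, inv_mul_cancel₀ hQ0.ne', Real.rpow_one]
          rw [abs_of_nonneg (ha0 n), han,
            Real.mul_rpow hε0.le (Real.rpow_nonneg hy0 _), hyy]
          have hεQ : ε ^ Q ≤ 1/2 :=
            le_trans (Real.rpow_le_rpow_of_exponent_ge hε0 hε1 hQm) hεm
          calc ε ^ Q * (c ^ (1 / d n) / S) ≤ (1/2) * (c ^ (1 / d n) / S) :=
                mul_le_mul_of_nonneg_right hεQ hy0
            _ = c ^ (1 / d n) / S / 2 := by ring
        · exact zero_le
      calc (∑ n ∈ F, if q n ≠ ⊤ then ENNReal.ofReal (|a n| ^ (q n).toReal) else 0)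
          ≤ ∑ n ∈ F, ENNReal.ofReal (c ^ (1 / d n) / S / 2) :=
            Finset.sum_le_sum hterm
        _ = ENNReal.ofReal (∑ n ∈ F, c ^ (1 / d n) / S / 2) :=
            (ENNReal.ofReal_sum_of_nonneg (fun i _ =>
              div_nonneg (div_nonneg (Real.rpow_nonneg hc0.le _) hS0.le) (by norm_num))).symm
        _ = ENNReal.ofReal (1/2) := by
            congr 1
            rw [← Finset.sum_div, ← Finset.sum_div, ← hS_def, div_self hS0.ne']
    have hsup : (⨆ n ∈ {j | q j = ⊤}, ENNReal.ofReal |a n|) ≤ ENNReal.ofReal (1/2) := by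
      refine iSup₂_le fun n hn => ENNReal.ofReal_le_ofReal ?_
      rw [abs_of_nonneg (ha0 n)]
      exact le_trans (haε n) hε_half
    show (∑' n, if q n ≠ ⊤ then ENNReal.ofReal (|a n| ^ (q n).toReal) else 0)
        + (⨆ n ∈ {j | q j = ⊤}, ENNReal.ofReal |a n|) ≤ 1
    calc _ ≤ ENNReal.ofReal (1/2) + ENNReal.ofReal (1/2) := add_le_add hsum hsup
      _ = 1 := by rw [← ENNReal.ofReal_add (by norm_num) (by norm_num)]; norm_num
  · -- lower bound for the p-norm
    set L : ℝ := (2:ℝ) ^ (-(1 + 1/m)) / (2*c) with hL_def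
    have hLε : L = ε / (2*c) := rfl
    have hL0 : 0 < L := by rw [hLε]; positivity
    apply le_vNormE ENNReal.ofReal_ne_top
    have hfun : (fun n => a n / (ENNReal.ofReal L).toReal) = fun n => a n / L := by
      funext n; rw [ENNReal.toReal_ofReal hL0.le]
    rw [hfun]
    have hlow : ∀ n ∈ F, ENNReal.ofReal ((2:ℝ) ^ m * c ^ (1 / d n) / S)
        ≤ (if p n ≠ ⊤ then ENNReal.ofReal (|a n / L| ^ (p n).toReal) else 0) := by
      intro n hn
      have hnB := hFB n hn
      have hpt := hBp n hnB
      rw [if_pos hpt]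
      apply ENNReal.ofReal_le_ofReal
      set P := (p n).toReal with hP_def
      have hP0 : 0 < P := ENNReal.toReal_pos (hp0 n) hpt
      have hPm : m ≤ P := hmP n hpt
      set Q' : ℝ := ((q n)⁻¹).toReal with hQ'_def
      have hQ'0 : 0 ≤ Q' := ENNReal.toReal_nonneg
      have hQ'P : Q' < P⁻¹ := by
        have h := hnB
        rw [hB_def, Set.mem_setOf_eq] at h
        rw [hQ'_def, hP_def, ← ENNReal.toReal_inv]
        exact h
      have hdn : d n = P⁻¹ - Q' := by
        obtain ⟨h, _⟩ := hd_pos n hnB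
        rw [h, ENNReal.toReal_inv]
      have hd0 : 0 < d n := (hd_pos n hnB).2
      set e : ℝ := Q' * P with he_def
      have he0 : 0 ≤ e := mul_nonneg hQ'0 hP0.le
      have he1 : e ≤ 1 := by
        have h := mul_lt_mul_of_pos_right hQ'P hP0
        rw [inv_mul_cancel₀ hP0.ne'] at h
        linarith
      have han : a n = ε * (c ^ (1 / d n) / S) ^ Q' := by
        simp only [ha_def]; rw [if_pos hn]
      have habs : |a n / L| = a n / L := abs_of_nonneg (div_nonneg (ha0 n) hL0.le)
      have hsimp : a n / L = (2*c) * (c ^ (1 / d n) / S) ^ Q' := by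
        rw [han, hLε]
        field_simp
      have hy0 : (0:ℝ) ≤ c ^ (1 / d n) / S := by positivity
      have hcd0 : (0:ℝ) ≤ c ^ (1 / d n) := by positivity
      have h6 : ((2*c) * (c ^ (1 / d n) / S) ^ Q') ^ P
          = (2:ℝ) ^ P * c ^ P * ((c ^ (1 / d n)) ^ e / S ^ e) := by
        rw [Real.mul_rpow (by positivity) (Real.rpow_nonneg hy0 _),
          Real.mul_rpow (by norm_num : (0:ℝ) ≤ 2) hc0.le,
          ← Real.rpow_mul hy0, ← he_def,
          Real.div_rpow hcd0 hS0.le, mul_assoc]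
      have hPd : P * d n = 1 - e := by
        rw [hdn, he_def]
        field_simp
      have h7 : c ^ P * (c ^ (1 / d n)) ^ e = c ^ (1 / d n) := by
        rw [← Real.rpow_mul hc0.le, ← Real.rpow_add hc0]
        congr 1
        have hdne : d n ≠ 0 := hd0.ne'
        field_simp
        nlinarith [hPd]
      have h8 : S ^ e ≤ S := by
        have := Real.rpow_le_rpow_of_exponent_le hS1.le he1
        rwa [Real.rpow_one] at this
      have h9 : (2:ℝ) ^ m ≤ (2:ℝ) ^ P := Real.rpow_le_rpow_of_exponent_le one_le_two hPm
      have hSe0 : (0:ℝ) < S ^ e := Real.rpow_pos_of_pos hS0 _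
      rw [habs, hsimp, h6]
      have hr : (2:ℝ) ^ P * c ^ P * ((c ^ (1 / d n)) ^ e / S ^ e)
          = (2:ℝ) ^ P * c ^ (1 / d n) / S ^ e := by
        rw [show (2:ℝ) ^ P * c ^ P * ((c ^ (1 / d n)) ^ e / S ^ e)
          = (2:ℝ) ^ P * (c ^ P * (c ^ (1 / d n)) ^ e) / S ^ e from by ring, h7]
      rw [hr]
      exact div_le_div₀ (by positivity) (mul_le_mul_of_nonneg_right h9 hcd0) hSe0 h8
    have hlowsum : ENNReal.ofReal ((2:ℝ) ^ m)
        ≤ ∑' n, (if p n ≠ ⊤ then ENNReal.ofReal (|a n / L| ^ (p n).toReal) else 0) := by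
      calc ENNReal.ofReal ((2:ℝ) ^ m)
          = ∑ n ∈ F, ENNReal.ofReal ((2:ℝ) ^ m * c ^ (1 / d n) / S) := by
            rw [← ENNReal.ofReal_sum_of_nonneg (fun i _ =>
              div_nonneg (mul_nonneg (Real.rpow_nonneg (by norm_num) _)
                (Real.rpow_nonneg hc0.le _)) hS0.le)]
            congr 1
            rw [← Finset.sum_div, ← Finset.mul_sum, ← hS_def, mul_div_assoc,
              div_self hS0.ne', mul_one]
        _ ≤ ∑ n ∈ F, (if p n ≠ ⊤ then ENNReal.ofReal (|a n / L| ^ (p n).toReal) else 0) :=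
            Finset.sum_le_sum hlow
        _ ≤ _ := ENNReal.sum_le_tsum F
    have h1lt : (1:ℝ≥0∞) < ENNReal.ofReal ((2:ℝ) ^ m) := by
      rw [← ENNReal.ofReal_one]
      exact (ENNReal.ofReal_lt_ofReal_iff (by positivity)).mpr
        ((Real.one_lt_rpow_iff_of_pos two_pos).mpr (Or.inl ⟨one_lt_two, hm0⟩))
    have : (1:ℝ≥0∞) <
        (∑' n, if p n ≠ ⊤ then ENNReal.ofReal (|a n / L| ^ (p n).toReal) else 0)
        + ⨆ n ∈ {j | p j = ⊤}, ENNReal.ofReal |a n / L| :=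
      lt_of_lt_of_le h1lt (hlowsum.trans le_self_add)
    exact this


theorem stmt_8 (p q : ℕ → ℝ≥0∞) (m : ℝ) (hm0 : 0 < m)
    (hmp : ∀ n, ENNReal.ofReal m ≤ p n) (hmq : ∀ n, ENNReal.ofReal m ≤ q n) :
    (∃ c : ℝ, 0 < c ∧ c < 1 ∧
        (∑' n : {n : ℕ | p n ≠ q n},
          ENNReal.ofReal (c ^ (1 / |((p n.1)⁻¹).toReal - ((q n.1)⁻¹).toReal|))) ≠ ⊤)
      ↔ (∃ C₁ C₂ : ℝ, 0 < C₁ ∧ 0 < C₂ ∧ ∀ a : ℕ → ℝ,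
          vNormE p a ≤ ENNReal.ofReal C₁ * vNormE q a ∧
          vNormE q a ≤ ENNReal.ofReal C₂ * vNormE p a) := by
  have hofm : (0:ℝ≥0∞) < ENNReal.ofReal m := ENNReal.ofReal_pos.mpr hm0
  have hp0 : ∀ n, p n ≠ 0 := fun n => (lt_of_lt_of_le hofm (hmp n)).ne'
  have hq0 : ∀ n, q n ≠ 0 := fun n => (lt_of_lt_of_le hofm (hmq n)).ne'
  constructor
  · rintro ⟨c, hc0, hc1, hT⟩
    obtain ⟨C₁, hC₁, h₁⟩ := embed p q m hm0 hmp hmq c hc0 hc1 hT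
    have hT' : (∑' n : {n : ℕ | q n ≠ p n},
        ENNReal.ofReal (c ^ (1 / |((q n.1)⁻¹).toReal - ((p n.1)⁻¹).toReal|))) ≠ ⊤ := by
      have hset : {n : ℕ | q n ≠ p n} = {n : ℕ | p n ≠ q n} := by
        ext n; exact ne_comm
      rw [hset]
      have hfun : (fun (n : {n : ℕ | p n ≠ q n}) =>
          ENNReal.ofReal (c ^ (1 / |((q n.1)⁻¹).toReal - ((p n.1)⁻¹).toReal|)))
          = (fun (n : {n : ℕ | p n ≠ q n}) =>
          ENNReal.ofReal (c ^ (1 / |((p n.1)⁻¹).toReal - ((q n.1)⁻¹).toReal|))) := by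
        funext n; rw [abs_sub_comm]
      rw [hfun]
      exact hT
    obtain ⟨C₂, hC₂, h₂⟩ := embed q p m hm0 hmq hmp c hc0 hc1 hT'
    exact ⟨C₁, C₂, hC₁, hC₂, fun a => ⟨h₁ a, h₂ a⟩⟩
  · rintro ⟨C₁, C₂, hC₁, hC₂, h⟩
    by_contra hni
    push_neg at hni
    -- choose a small c
    set ε : ℝ := (2:ℝ) ^ (-(1 + 1/m)) with hε_def
    have hε0 : 0 < ε := Real.rpow_pos_of_pos two_pos _
    set M : ℝ := max C₁ C₂ with hM_def
    have hM0 : 0 < M := lt_of_lt_of_le hC₁ (le_max_left _ _)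
    set c : ℝ := min (1/2) (ε/(4*(M+1))) with hc_def
    have hc0 : 0 < c := lt_min (by norm_num) (by positivity)
    have hc1 : c < 1 := lt_of_le_of_lt (min_le_left _ _) (by norm_num)
    have hMε : M < ε / (2*c) := by
      have h1 : c ≤ ε/(4*(M+1)) := min_le_right _ _
      have h2 : 2*(M+1) ≤ ε/(2*c) := by
        rw [le_div_iff₀ (by positivity)]
        calc 2*(M+1)*(2*c) = (4*(M+1))*c := by ring
          _ ≤ (4*(M+1))*(ε/(4*(M+1))) := by
              apply mul_le_mul_of_nonneg_left h1 (by positivity)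
          _ = ε := by field_simp
      linarith
    have hA := hni c hc0 hc1
    -- split the divergent sum into the two one-sided parts
    set f : ℕ → ℝ≥0∞ :=
      fun n => ENNReal.ofReal (c ^ (1 / |((p n)⁻¹).toReal - ((q n)⁻¹).toReal|)) with hf_def
    set B₁ : Set ℕ := {n | ((q n)⁻¹).toReal < ((p n)⁻¹).toReal} with hB₁_def
    set B₂ : Set ℕ := {n | ((p n)⁻¹).toReal < ((q n)⁻¹).toReal} with hB₂_def
    have hsplit : (∑' n : B₁, f n.1) = ⊤ ∨ (∑' n : B₂, f n.1) = ⊤ := by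
      by_contra hcon
      push_neg at hcon
      have hne : ∀ n, p n ≠ q n → ((p n)⁻¹).toReal ≠ ((q n)⁻¹).toReal := by
        intro n hn heq
        have hpt : (p n)⁻¹ ≠ ⊤ := ENNReal.inv_ne_top.mpr (hp0 n)
        have hqt : (q n)⁻¹ ≠ ⊤ := ENNReal.inv_ne_top.mpr (hq0 n)
        have h1 : (p n)⁻¹ = (q n)⁻¹ := (ENNReal.toReal_eq_toReal_iff' hpt hqt).mp heq
        exact hn (by simpa using congrArg (·⁻¹) h1)
      have hind : ∀ n, Set.indicator {n | p n ≠ q n} f n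
          ≤ Set.indicator B₁ f n + Set.indicator B₂ f n := by
        intro n
        by_cases hn : p n ≠ q n
        · rw [Set.indicator_of_mem (show n ∈ {n | p n ≠ q n} from hn)]
          rcases lt_or_gt_of_ne (hne n hn) with hlt | hgt
          · refine le_trans ?_ le_add_self
            rw [Set.indicator_of_mem (show n ∈ B₂ from hlt)]
          · refine le_trans ?_ le_self_add
            rw [Set.indicator_of_mem (show n ∈ B₁ from hgt)]
        · rw [Set.indicator_of_notMem (show n ∉ {n | p n ≠ q n} from hn)]
          exact zero_le
      have htop : (⊤ : ℝ≥0∞) ≤ (∑' n : B₁, f n.1) + (∑' n : B₂, f n.1) := by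
        calc (⊤ : ℝ≥0∞) = ∑' n : {n | p n ≠ q n}, f n.1 := hA.symm
          _ = ∑' n, Set.indicator {n | p n ≠ q n} f n := tsum_subtype _ f
          _ ≤ ∑' n, (Set.indicator B₁ f n + Set.indicator B₂ f n) :=
              ENNReal.tsum_le_tsum hind
          _ = (∑' n, Set.indicator B₁ f n) + (∑' n, Set.indicator B₂ f n) :=
              ENNReal.tsum_add
          _ = (∑' n : B₁, f n.1) + (∑' n : B₂, f n.1) := by
              rw [tsum_subtype B₁ f, tsum_subtype B₂ f]
      have := top_le_iff.mp htop
      rcases ENNReal.add_eq_top.mp this with h1 | h2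
      · exact hcon.1 h1
      · exact hcon.2 h2
    rcases hsplit with hB | hB
    · obtain ⟨a, haq, hap⟩ := blowup p q m hm0 hmp hmq c hc0 hc1 hB
      have h1 : vNormE p a ≤ ENNReal.ofReal C₁ := by
        calc vNormE p a ≤ ENNReal.ofReal C₁ * vNormE q a := (h a).1
          _ ≤ ENNReal.ofReal C₁ * 1 := mul_le_mul_right haq _
          _ = ENNReal.ofReal C₁ := mul_one _
      have h2 : ENNReal.ofReal C₁ < ENNReal.ofReal (ε / (2*c)) :=
        (ENNReal.ofReal_lt_ofReal_iff (by positivity)).mpr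
          (lt_of_le_of_lt (le_max_left C₁ C₂) hMε)
      exact absurd (hap.trans h1) (not_le.mpr h2)
    · have hB' : (∑' n : {n : ℕ | ((p n)⁻¹).toReal < ((q n)⁻¹).toReal},
          ENNReal.ofReal (c ^ (1 / |((q n.1)⁻¹).toReal - ((p n.1)⁻¹).toReal|))) = ⊤ := by
        have hfun : (fun (n : {n : ℕ | ((p n)⁻¹).toReal < ((q n)⁻¹).toReal}) =>
            ENNReal.ofReal (c ^ (1 / |((q n.1)⁻¹).toReal - ((p n.1)⁻¹).toReal|)))
            = fun (n : {n : ℕ | ((p n)⁻¹).toReal < ((q n)⁻¹).toReal}) => f n.1 := by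
          funext n; rw [hf_def, abs_sub_comm]
        rw [hfun]
        exact hB
      obtain ⟨a, hap, haq⟩ := blowup q p m hm0 hmq hmp c hc0 hc1 hB'
      have h1 : vNormE q a ≤ ENNReal.ofReal C₂ := by
        calc vNormE q a ≤ ENNReal.ofReal C₂ * vNormE p a := (h a).2
          _ ≤ ENNReal.ofReal C₂ * 1 := mul_le_mul_right hap _
          _ = ENNReal.ofReal C₂ := mul_one _
      have h2 : ENNReal.ofReal C₂ < ENNReal.ofReal (ε / (2*c)) :=
        (ENNReal.ofReal_lt_ofReal_iff (by positivity)).mpr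
          (lt_of_le_of_lt (le_max_right C₁ C₂) hMε)
      exact absurd (haq.trans h1) (not_le.mpr h2)
end

section
/- Let 0 < p_- ≤ p_n < q_n < ∞ for all n. If there exists an infinite subset S ⊂ ℕ and 0 < c < 1 with Σ_{n∈S} c^{1/(1/p_n - 1/q_n)} < ∞, then the natural embedding id: ℓ_{p_n} → ℓ_{q_n} is not strictly singular. -/
open scoped ENNReal

/-- The natural embedding `id : ℓ_{p_n} → ℓ_{q_n}` is strictly singular:
there is no infinite-dimensional subspace of `ℓ_{p_n}` on which the two
quasi-norms are equivalent (i.e. on which `id` is an isomorphism onto its image). -/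
def StrictlySingularEmb (p q : ℕ → ℝ) : Prop :=
  ¬ ∃ E : Submodule ℝ (ℕ → ℝ), (¬ Module.Finite ℝ E) ∧
      (∀ a ∈ E, vNorm p a ≠ ⊤) ∧
      ∃ c : ℝ, 0 < c ∧ ∀ a ∈ E, ENNReal.ofReal c * vNorm p a ≤ vNorm q a

private lemma li_single : LinearIndependent ℝ (fun n : ℕ => Pi.single n (1:ℝ)) := by
  classical
  rw [linearIndependent_iff']
  intro s g h i hi
  have h2 := congrFun h i
  simp only [Finset.sum_apply, Pi.smul_apply, Pi.single_apply, smul_eq_mul,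
    mul_ite, mul_one, mul_zero, Finset.sum_ite_eq, hi, if_pos, Pi.zero_apply] at h2
  exact h2

private lemma exp_eq {p q : ℝ} (hp : 0 < p) (hq : 0 < q) :
    1/(1/p - 1/q) = p*q/(q-p) := by
  rw [show (1/p - 1/q) = (q-p)/(p*q) by field_simp, one_div_div]

private lemma key_pt {c t p q : ℝ} (hc0 : 0 < c) (ht : 0 ≤ t) (hp : 0 < p)
    (hpq : p < q) : c ^ p * t ^ p ≤ t ^ q + c ^ (p * q / (q - p)) := by
  have hqp : (0:ℝ) < q - p := sub_pos.2 hpq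
  by_cases h : c ^ (p/(q-p)) ≤ t
  · have ht0 : 0 < t := lt_of_lt_of_le (Real.rpow_pos_of_pos hc0 _) h
    have h1 : c ^ p ≤ t ^ (q - p) := by
      calc c ^ p = (c ^ (p/(q-p))) ^ (q - p) := by
            rw [← Real.rpow_mul hc0.le, div_mul_cancel₀ _ hqp.ne']
        _ ≤ t ^ (q-p) := Real.rpow_le_rpow (Real.rpow_nonneg hc0.le _) h hqp.le
    calc c ^ p * t ^ p ≤ t ^ (q-p) * t ^ p :=
          mul_le_mul_of_nonneg_right h1 (Real.rpow_nonneg ht p)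
      _ = t ^ q := by rw [← Real.rpow_add ht0]; ring_nf
      _ ≤ t ^ q + c ^ (p * q / (q - p)) :=
          le_add_of_nonneg_right (Real.rpow_nonneg hc0.le _)
  · push_neg at h
    have h1 : t ^ p ≤ (c ^ (p/(q-p))) ^ p := Real.rpow_le_rpow ht h.le hp.le
    calc c ^ p * t ^ p ≤ c ^ p * (c ^ (p/(q-p))) ^ p :=
          mul_le_mul_of_nonneg_left h1 (Real.rpow_nonneg hc0.le p)
      _ = c ^ (p + p/(q-p)*p) := by rw [← Real.rpow_mul hc0.le, ← Real.rpow_add hc0]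
      _ = c ^ (p*q/(q-p)) := by congr 1; field_simp; ring
      _ ≤ t ^ q + c ^ (p*q/(q-p)) := le_add_of_nonneg_left (Real.rpow_nonneg ht q)

private lemma vNorm_ne_top {p : ℕ → ℝ} {pm : ℝ} (hpm0 : 0 < pm) (hle : ∀ n, pm ≤ p n)
    {a : ℕ → ℝ} (hfin : (Function.support a).Finite) : vNorm p a ≠ ⊤ := by
  classical
  set T : Finset ℕ := hfin.toFinset with hT
  set k : ℝ := (T.card : ℝ) with hk
  have hk0 : 0 ≤ k := by positivity
  have hk1 : (0:ℝ) < k + 1 := by positivity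
  set δ : ℝ := min 1 ((k+1)⁻¹ ^ (1/pm)) with hδ
  have hδ0 : 0 < δ := lt_min one_pos (Real.rpow_pos_of_pos (by positivity) _)
  have hδ1 : δ ≤ 1 := min_le_left _ _
  set s : ℝ := ∑ n ∈ T, |a n| with hs
  have hs0 : 0 ≤ s := Finset.sum_nonneg fun n _ => abs_nonneg _
  set l : ℝ := (1 + s) / δ with hl
  have hl0 : 0 < l := div_pos (by linarith) hδ0
  have hmem : ENNReal.ofReal l ∈ {l : ℝ≥0∞ | 0 < l ∧ l ≠ ⊤ ∧
      (∑' n, ENNReal.ofReal ((|a n| / l.toReal) ^ p n)) ≤ 1} := by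
    refine ⟨ENNReal.ofReal_pos.2 hl0, ENNReal.ofReal_ne_top, ?_⟩
    rw [ENNReal.toReal_ofReal hl0.le]
    have hzero : ∀ n ∉ T, ENNReal.ofReal ((|a n| / l) ^ p n) = 0 := by
      intro n hn
      have : a n = 0 := by simpa [hT] using hn
      have hp0 : p n ≠ 0 := (hpm0.trans_le (hle n)).ne'
      rw [this, abs_zero, zero_div, Real.zero_rpow hp0]
      simp
    rw [tsum_eq_sum hzero]
    have hterm : ∀ n ∈ T, ENNReal.ofReal ((|a n| / l) ^ p n) ≤ ENNReal.ofReal ((k+1)⁻¹) := by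
      intro n hn
      have han : a n ≠ 0 := by simpa [hT] using hn
      have hx0 : 0 < |a n| / l := div_pos (abs_pos.2 han) hl0
      have hxδ : |a n| / l ≤ δ := by
        rw [div_le_iff₀ hl0]
        have h1 : |a n| ≤ s := Finset.single_le_sum (f := fun n => |a n|)
          (fun i _ => abs_nonneg _) hn
        have h2 : δ * l = 1 + s := by
          rw [hl, mul_div_cancel₀ _ hδ0.ne']
        nlinarith
      have hx1 : |a n| / l ≤ 1 := hxδ.trans hδ1
      have h3 : (|a n| / l) ^ p n ≤ (|a n| / l) ^ pm :=
        Real.rpow_le_rpow_of_exponent_ge hx0 hx1 (hle n)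
      have h4 : (|a n| / l) ^ pm ≤ δ ^ pm := Real.rpow_le_rpow hx0.le hxδ hpm0.le
      have h5 : δ ^ pm ≤ (k+1)⁻¹ := by
        calc δ ^ pm ≤ ((k+1)⁻¹ ^ (1/pm)) ^ pm :=
              Real.rpow_le_rpow hδ0.le (min_le_right _ _) hpm0.le
          _ = (k+1)⁻¹ := by
              rw [← Real.rpow_mul (by positivity), one_div_mul_cancel hpm0.ne', Real.rpow_one]
      exact ENNReal.ofReal_le_ofReal (by linarith)
    calc ∑ n ∈ T, ENNReal.ofReal ((|a n| / l) ^ p n)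
        ≤ ∑ _n ∈ T, ENNReal.ofReal ((k+1)⁻¹) := Finset.sum_le_sum hterm
      _ = (T.card : ℝ≥0∞) * ENNReal.ofReal ((k+1)⁻¹) := by
          rw [Finset.sum_const, nsmul_eq_mul]
      _ = ENNReal.ofReal (k * (k+1)⁻¹) := by
          rw [ENNReal.ofReal_mul hk0, ENNReal.ofReal_natCast]
      _ ≤ 1 := by
          rw [← ENNReal.ofReal_one]
          exact ENNReal.ofReal_le_ofReal
            (by rw [← div_eq_mul_inv]; exact div_le_one_of_le₀ (by linarith) hk1.le)
  intro htop
  have hle2 := sInf_le hmem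
  rw [show sInf {l : ℝ≥0∞ | 0 < l ∧ l ≠ ⊤ ∧
      (∑' n, ENNReal.ofReal ((|a n| / l.toReal) ^ p n)) ≤ 1} = vNorm p a from rfl, htop] at hle2
  exact ENNReal.ofReal_ne_top (top_le_iff.1 hle2)

private lemma span_prop {S : Set ℕ} {a : ℕ → ℝ}
    (h : a ∈ Submodule.span ℝ ((fun n => Pi.single n (1:ℝ)) '' S)) :
    (Function.support a).Finite ∧ ∀ n ∉ S, a n = 0 := by
  classical
  refine Submodule.span_induction ?_ ?_ ?_ ?_ h
  · rintro x ⟨n, hn, rfl⟩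
    constructor
    · exact (Set.finite_singleton n).subset (by
        intro m hm
        by_contra hmn
        exact hm (Pi.single_eq_of_ne (by simpa using hmn) 1))
    · intro m hm
      exact Pi.single_eq_of_ne (by rintro rfl; exact hm hn) 1
  · exact ⟨by simp, fun n _ => rfl⟩
  · rintro x y _ _ ⟨hx1, hx2⟩ ⟨hy1, hy2⟩
    refine ⟨(hx1.union hy1).subset (Function.support_add _ _), fun n hn => by
      simp [Pi.add_apply, hx2 n hn, hy2 n hn]⟩
  · rintro r x _ ⟨hx1, hx2⟩
    refine ⟨hx1.subset (Function.support_const_smul_subset r x), fun n hn => by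
      simp [Pi.smul_apply, hx2 n hn]⟩

theorem stmt_9 (p q : ℕ → ℝ) (pm : ℝ) (hpm0 : 0 < pm) (hle : ∀ n, pm ≤ p n)
    (hpq : ∀ n, p n < q n) (S : Set ℕ) (hS : S.Infinite)
    (c : ℝ) (hc0 : 0 < c) (hc1 : c < 1)
    (hsum : (∑' n : S, ENNReal.ofReal (c ^ (1 / (1 / p n.1 - 1 / q n.1)))) ≠ ⊤) :
    ¬ StrictlySingularEmb p q := by
  classical
  intro hss
  apply hss
  set f : ℕ → ℕ → ℝ := fun n => Pi.single n (1:ℝ) with hf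
  set E : Submodule ℝ (ℕ → ℝ) := Submodule.span ℝ (f '' S) with hE
  have hp0 : ∀ n, 0 < p n := fun n => hpm0.trans_le (hle n)
  have hq0 : ∀ n, 0 < q n := fun n => (hp0 n).trans (hpq n)
  -- the constant
  set M : ℝ≥0∞ := ∑' n : S, ENNReal.ofReal (c ^ (1 / (1 / p n.1 - 1 / q n.1))) with hM
  set Mr : ℝ := M.toReal with hMr
  have hMr0 : 0 ≤ Mr := ENNReal.toReal_nonneg
  have hM_eq : M = ENNReal.ofReal Mr := (ENNReal.ofReal_toReal hsum).symm
  set ε : ℝ := (1 + Mr)⁻¹ ^ (1/pm) with hε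
  have hε0 : 0 < ε := Real.rpow_pos_of_pos (by positivity) _
  have hε1 : ε ≤ 1 := Real.rpow_le_one (by positivity)
    (inv_le_one_of_one_le₀ (by linarith)) (by positivity)
  have hεpm : ε ^ pm = (1 + Mr)⁻¹ := by
    rw [hε, ← Real.rpow_mul (by positivity), one_div_mul_cancel hpm0.ne', Real.rpow_one]
  set c₀ : ℝ := c * ε with hc₀
  have hc₀0 : 0 < c₀ := mul_pos hc0 hε0
  refine ⟨E, ?_, ?_, c₀, hc₀0, ?_⟩
  · -- infinite-dimensional
    intro hfin
    have hmem : ∀ n : S, f (n : ℕ) ∈ E :=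
      fun n => Submodule.subset_span ⟨(n : ℕ), n.2, rfl⟩
    have li0 : LinearIndependent ℝ (fun n : S => f (n : ℕ)) :=
      li_single.comp (fun n : S => (n : ℕ)) Subtype.val_injective
    have li : LinearIndependent ℝ (fun n : S => (⟨f (n : ℕ), hmem n⟩ : E)) :=
      LinearIndependent.of_comp E.subtype li0
    have : Finite S := li.finite
    exact (Set.infinite_coe_iff.2 hS).not_finite this
  · -- vNorm p finite on E
    intro a ha
    exact vNorm_ne_top hpm0 hle (span_prop ha).1
  · -- the norm inequality
    intro a ha
    have haS : ∀ n ∉ S, a n = 0 := (span_prop ha).2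
    refine le_sInf ?_
    rintro L ⟨hL0, hLt, hLsum⟩
    set l : ℝ := L.toReal with hl
    have hl0 : 0 < l := ENNReal.toReal_pos hL0.ne' hLt
    -- show l / c₀ is admissible for p
    have hmem : ENNReal.ofReal (l / c₀) ∈ {l : ℝ≥0∞ | 0 < l ∧ l ≠ ⊤ ∧
        (∑' n, ENNReal.ofReal ((|a n| / l.toReal) ^ p n)) ≤ 1} := by
      refine ⟨ENNReal.ofReal_pos.2 (div_pos hl0 hc₀0), ENNReal.ofReal_ne_top, ?_⟩
      rw [ENNReal.toReal_ofReal (div_pos hl0 hc₀0).le]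
      set B : ℕ → ℝ≥0∞ := fun n => ENNReal.ofReal ((1+Mr)⁻¹) *
        (ENNReal.ofReal ((|a n| / l) ^ q n) +
          Set.indicator S (fun m => ENNReal.ofReal (c ^ (1 / (1 / p m - 1 / q m)))) n) with hB
      have hbd : ∀ n, ENNReal.ofReal ((|a n| / (l / c₀)) ^ p n) ≤ B n := by
        intro n
        by_cases hn : n ∈ S
        · set t : ℝ := |a n| / l with ht
          have ht0 : 0 ≤ t := div_nonneg (abs_nonneg _) hl0.le
          have hrw : |a n| / (l / c₀) = c₀ * t := by
            field_simp [ht]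
            rw [ht, mul_div_cancel₀ _ hl0.ne']
          have hreal : (c₀ * t) ^ p n ≤
              (1+Mr)⁻¹ * (t ^ q n + c ^ (1 / (1 / p n - 1 / q n))) := by
            rw [exp_eq (hp0 n) (hq0 n)]
            have e1 : (c₀ * t) ^ p n = ε ^ p n * (c ^ p n * t ^ p n) := by
              rw [hc₀, show c * ε * t = ε * (c * t) by ring,
                Real.mul_rpow hε0.le (mul_nonneg hc0.le ht0),
                Real.mul_rpow hc0.le ht0]
            have e2 : ε ^ p n ≤ (1+Mr)⁻¹ := by
              rw [← hεpm]
              exact Real.rpow_le_rpow_of_exponent_ge hε0 hε1 (hle n)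
            have e3 : c ^ p n * t ^ p n ≤ t ^ q n + c ^ (p n * q n / (q n - p n)) :=
              key_pt hc0 ht0 (hp0 n) (hpq n)
            calc (c₀ * t) ^ p n = ε ^ p n * (c ^ p n * t ^ p n) := e1
              _ ≤ (1+Mr)⁻¹ * (c ^ p n * t ^ p n) :=
                  mul_le_mul_of_nonneg_right e2
                    (mul_nonneg (Real.rpow_nonneg hc0.le _) (Real.rpow_nonneg ht0 _))
              _ ≤ (1+Mr)⁻¹ * (t ^ q n + c ^ (p n * q n / (q n - p n))) :=
                  mul_le_mul_of_nonneg_left e3 (by positivity)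
          rw [hrw]
          calc ENNReal.ofReal ((c₀ * t) ^ p n)
              ≤ ENNReal.ofReal ((1+Mr)⁻¹ * (t ^ q n + c ^ (1 / (1 / p n - 1 / q n)))) :=
                ENNReal.ofReal_le_ofReal hreal
            _ ≤ B n := by
                simp only [hB]
                rw [Set.indicator_of_mem hn,
                  ENNReal.ofReal_mul (by positivity : (0:ℝ) ≤ (1+Mr)⁻¹)]
                exact mul_le_mul_right (ENNReal.ofReal_add_le) _
        · have : a n = 0 := haS n hn
          rw [this, abs_zero, zero_div, Real.zero_rpow (hp0 n).ne']
          simp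
      calc (∑' n, ENNReal.ofReal ((|a n| / (l / c₀)) ^ p n)) ≤ ∑' n, B n :=
            ENNReal.tsum_le_tsum hbd
        _ = ENNReal.ofReal ((1+Mr)⁻¹) *
            ((∑' n, ENNReal.ofReal ((|a n| / l) ^ q n)) +
              ∑' n, Set.indicator S (fun m => ENNReal.ofReal (c ^ (1 / (1 / p m - 1 / q m)))) n) := by
            rw [hB, ENNReal.tsum_mul_left, ENNReal.tsum_add]
        _ ≤ ENNReal.ofReal ((1+Mr)⁻¹) * (1 + M) := by
            refine mul_le_mul_right (add_le_add ?_ ?_) _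
            · exact hLsum
            · rw [hM, tsum_subtype S (fun m => ENNReal.ofReal (c ^ (1 / (1 / p m - 1 / q m))))]
        _ = 1 := by
            rw [hM_eq, ← ENNReal.ofReal_one, ← ENNReal.ofReal_add zero_le_one hMr0,
              ← ENNReal.ofReal_mul (by positivity),
              inv_mul_cancel₀ (by positivity : (1:ℝ) + Mr ≠ 0)]
    have h1 : vNorm p a ≤ ENNReal.ofReal (l / c₀) := sInf_le hmem
    calc ENNReal.ofReal c₀ * vNorm p a ≤ ENNReal.ofReal c₀ * ENNReal.ofReal (l / c₀) :=
          mul_le_mul_right h1 _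
      _ = ENNReal.ofReal (c₀ * (l / c₀)) := (ENNReal.ofReal_mul hc₀0.le).symm
      _ = ENNReal.ofReal l := by rw [mul_div_cancel₀ _ hc₀0.ne']
      _ = L := ENNReal.ofReal_toReal hLt
end

section
/- Let X be a linear space of real sequences vanishing at infinity. Then every n-dimensional subspace E ⊂ X contains a nonzero element x such that the maximum of |x(i)| over i ∈ ℕ is attained in at least n points. -/
open Filter Set Topology

private lemma plichko_finite {x : ℕ → ℝ} (hx : Tendsto x atTop (𝓝 0)) {t : ℝ} (ht : 0 < t) :
    {i | t ≤ |x i|}.Finite := by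
  have h : ∀ᶠ i in atTop, |x i| < t := by
    simpa [Real.norm_eq_abs] using (NormedAddCommGroup.tendsto_nhds_zero.mp hx t ht)
  rcases eventually_atTop.mp h with ⟨N, hN⟩
  refine (Set.finite_Iio N).subset fun i hi => ?_
  by_contra hcon
  exact absurd hi (not_le.mpr (hN i (not_lt.mp hcon)))

private lemma plichko_bdd {x : ℕ → ℝ} (hx : Tendsto x atTop (𝓝 0)) :
    BddAbove (Set.range fun j => |x j|) := by
  have : Tendsto (fun j => |x j|) atTop (𝓝 0) := by simpa using hx.abs
  exact this.bddAbove_range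

private lemma plichko_attained {x : ℕ → ℝ} (hx : Tendsto x atTop (𝓝 0)) (hx0 : x ≠ 0) :
    0 < (⨆ j, |x j|) ∧ ∃ i, |x i| = ⨆ j, |x j| := by
  set s := ⨆ j, |x j| with hs_def
  have hbdd := plichko_bdd hx
  obtain ⟨i0, hi0⟩ : ∃ i, x i ≠ 0 := by
    by_contra h; push_neg at h; exact hx0 (funext h)
  have hs : 0 < s := lt_of_lt_of_le (abs_pos.mpr hi0) (le_ciSup hbdd i0)
  refine ⟨hs, ?_⟩
  have hTfin : {i | s/2 ≤ |x i|}.Finite := plichko_finite hx (by linarith)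
  obtain ⟨i1, hi1⟩ : ∃ i, s/2 < |x i| := exists_lt_of_lt_ciSup (by rw [← hs_def]; linarith)
  have hne : hTfin.toFinset.Nonempty := ⟨i1, hTfin.mem_toFinset.mpr hi1.le⟩
  obtain ⟨b, hb, hmax⟩ := hTfin.toFinset.exists_max_image (fun i => |x i|) hne
  refine ⟨b, le_antisymm (le_ciSup hbdd b) (ciSup_le fun j => ?_)⟩
  by_cases hj : s/2 ≤ |x j|
  · exact hmax j (hTfin.mem_toFinset.mpr hj)
  · have hb2 : s/2 ≤ |x b| := hTfin.mem_toFinset.mp hb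
    linarith [not_le.mp hj]

private lemma plichko_ker (E : Submodule ℝ (ℕ → ℝ)) {n : ℕ} (hdim : Module.finrank ℝ E = n)
    (F : Finset ℕ) (hF : F.card < n) :
    ∃ y ∈ E, y ≠ 0 ∧ ∀ i ∈ F, y i = 0 := by
  let φ : E →ₗ[ℝ] (F → ℝ) := LinearMap.pi fun i => (LinearMap.proj (i : ℕ)).comp E.subtype
  have hker : LinearMap.ker φ ≠ ⊥ := by
    intro h
    have hinj := LinearMap.ker_eq_bot.mp h
    have hle := LinearMap.finrank_le_finrank_of_injective hinj
    rw [hdim, Module.finrank_pi, Fintype.card_coe] at hle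
    omega
  obtain ⟨y, hy, hy0⟩ := (Submodule.ne_bot_iff _).mp hker
  refine ⟨(y : ℕ → ℝ), y.2, ?_, ?_⟩
  · intro h; exact hy0 (Subtype.ext h)
  · intro i hi
    have := congrFun (LinearMap.mem_ker.mp hy) ⟨i, hi⟩
    simpa [φ] using this

private lemma plichko_step (X : Submodule ℝ (ℕ → ℝ))
    (hX : ∀ x ∈ X, Tendsto x atTop (𝓝 0)) {n : ℕ}
    (E : Submodule ℝ (ℕ → ℝ)) (hEX : E ≤ X) (hdim : Module.finrank ℝ E = n)
    {x : ℕ → ℝ} (hxE : x ∈ E) (hx0 : x ≠ 0)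
    (hlt : {i | |x i| = ⨆ j, |x j|}.ncard < n) :
    ∃ x' ∈ E, x' ≠ 0 ∧ {i | |x i| = ⨆ j, |x j|}.ncard < {i | |x' i| = ⨆ j, |x' j|}.ncard := by
  have hxc := hX x (hEX hxE)
  have hxbdd := plichko_bdd hxc
  set s := ⨆ j, |x j| with hs_def
  obtain ⟨hs, i0, hi0⟩ := plichko_attained hxc hx0
  set M := {i : ℕ | |x i| = s} with hM_def
  have hMfin : M.Finite := (plichko_finite hxc hs).subset (fun i hi => hi.ge)
  have hcard : hMfin.toFinset.card < n := by
    rwa [Set.ncard_eq_toFinset_card _ hMfin] at hlt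
  obtain ⟨y, hyE, hy0, hyF⟩ := plichko_ker E hdim hMfin.toFinset hcard
  have hyM : ∀ i ∈ M, y i = 0 := fun i hi => hyF i (hMfin.mem_toFinset.mpr hi)
  have hyc := hX y (hEX hyE)
  have hybdd := plichko_bdd hyc
  obtain ⟨j0, hj0⟩ : ∃ j, y j ≠ 0 := by
    by_contra h; push_neg at h; exact hy0 (funext h)
  set S := {t : ℝ | 0 ≤ t ∧ ∀ i, |x i + t * y i| ≤ s} with hS_def
  have h0S : (0:ℝ) ∈ S := ⟨le_refl 0, fun i => by simpa using le_ciSup hxbdd i⟩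
  have hSne : S.Nonempty := ⟨0, h0S⟩
  have hSbdd : BddAbove S := by
    refine ⟨(|x j0| + s)/|y j0|, fun t ht => ?_⟩
    have h2 : |t * y j0| = t * |y j0| := by rw [abs_mul, abs_of_nonneg ht.1]
    have h1 : t * |y j0| ≤ |x j0| + s := by
      have h3 : |t * y j0| = |x j0 + t * y j0 - x j0| := by ring_nf
      have h4 := abs_sub (x j0 + t * y j0) (x j0)
      have h5 := ht.2 j0
      rw [← h2, h3]
      calc |x j0 + t * y j0 - x j0| ≤ |x j0 + t * y j0| + |x j0| := abs_sub _ _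
        _ ≤ |x j0| + s := by linarith
    exact (le_div_iff₀ (abs_pos.mpr hj0)).mpr h1
  set c := sSup S with hc_def
  have hc0 : 0 ≤ c := le_csSup hSbdd h0S
  have hcS : c ∈ S := by
    refine ⟨hc0, fun i => ?_⟩
    by_cases hyi : y i = 0
    · simpa [hyi] using le_ciSup hxbdd i
    · refine le_of_forall_pos_le_add fun ε hε => ?_
      have hyia : 0 < |y i| := abs_pos.mpr hyi
      obtain ⟨t, htS, htlt⟩ := exists_lt_of_lt_csSup hSne
        (show c - ε/|y i| < c by have := div_pos hε hyia; linarith)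
      have htle : t ≤ c := le_csSup hSbdd htS
      have h6 := htS.2 i
      have h7 : (c - t) * |y i| ≤ ε := by
        have h8 : c - t ≤ ε/|y i| := by linarith
        calc (c - t) * |y i| ≤ (ε/|y i|) * |y i| :=
              mul_le_mul_of_nonneg_right h8 (abs_nonneg _)
          _ = ε := div_mul_cancel₀ ε (ne_of_gt hyia)
      calc |x i + c * y i| = |(x i + t * y i) + (c - t) * y i| := by ring_nf
        _ ≤ |x i + t * y i| + |(c - t) * y i| := abs_add_le _ _
        _ = |x i + t * y i| + (c - t) * |y i| := by
            rw [abs_mul, abs_of_nonneg (by linarith : (0:ℝ) ≤ c - t)]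
        _ ≤ s + ε := by linarith
  set x' := x + c • y with hx'_def
  have hx'E : x' ∈ E := E.add_mem hxE (E.smul_mem c hyE)
  have hx'c := hX x' (hEX hx'E)
  have hx'bdd := plichko_bdd hx'c
  have hx'i : ∀ i, x' i = x i + c * y i := fun i => rfl
  have hi0M : i0 ∈ M := hi0
  have hx'i0 : x' i0 = x i0 := by rw [hx'i, hyM i0 hi0M, mul_zero, add_zero]
  have hx'sup : (⨆ j, |x' j|) = s := by
    apply le_antisymm
    · exact ciSup_le fun i => by rw [hx'i]; exact hcS.2 i
    · calc s = |x' i0| := by rw [hx'i0, hi0]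
        _ ≤ ⨆ j, |x' j| := le_ciSup hx'bdd i0
  have hMsub : M ⊆ {i | |x' i| = ⨆ j, |x' j|} := by
    intro i hi
    rw [Set.mem_setOf_eq, hx'sup, hx'i, hyM i hi, mul_zero, add_zero]
    exact hi
  have hx'0 : x' ≠ 0 := by
    intro h
    have : |x' i0| = s := by rw [hx'i0, hi0]
    rw [h] at this
    simp at this
    linarith
  have hM'fin : {i | |x' i| = ⨆ j, |x' j|}.Finite := by
    refine (plichko_finite hx'c hs).subset fun i hi => ?_
    rw [Set.mem_setOf_eq, hx'sup] at hi
    exact hi.ge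
  refine ⟨x', hx'E, hx'0, ?_⟩
  refine Set.ncard_lt_ncard (ssubset_of_subset_of_ne hMsub ?_) hM'fin
  intro heq
  -- heq : M = M(x'); derive contradiction via a larger element of S
  have hnotM : ∀ i, i ∉ M → |x' i| < s := by
    intro i hi
    have h1 : |x' i| ≤ s := by rw [hx'i]; exact hcS.2 i
    have h2 : |x' i| ≠ s := by
      intro h
      apply hi
      rw [heq, Set.mem_setOf_eq, hx'sup]
      exact h
    exact lt_of_le_of_ne h1 h2
  -- build δ
  have hT'fin : ({i | s/2 ≤ |x' i|} \ M).Finite := ((plichko_finite hx'c (by linarith)).diff)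
  set G := hT'fin.toFinset with hG_def
  set D := insert (s/2) (G.image fun i => |x' i|) with hD_def
  have hDne : D.Nonempty := Finset.insert_nonempty _ _
  set δ := D.max' hDne with hδ_def
  have hδlt : δ < s := by
    rw [hδ_def]
    rw [Finset.max'_lt_iff]
    intro b hb
    rcases Finset.mem_insert.mp hb with h | h
    · rw [h]; linarith
    · obtain ⟨i, hiG, hib⟩ := Finset.mem_image.mp h
      rw [← hib]
      exact hnotM i (hT'fin.mem_toFinset.mp hiG).2
  have hδge : ∀ i, i ∉ M → |x' i| ≤ δ := by
    intro i hi
    by_cases h : s/2 ≤ |x' i|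
    · exact Finset.le_max' D _ (Finset.mem_insert_of_mem
        (Finset.mem_image.mpr ⟨i, hT'fin.mem_toFinset.mpr ⟨h, hi⟩, rfl⟩))
    · have := Finset.le_max' D (s/2) (Finset.mem_insert_self _ _)
      linarith [not_le.mp h]
  set K := ⨆ j, |y j| with hK_def
  have hK : 0 < K := lt_of_lt_of_le (abs_pos.mpr hj0) (le_ciSup hybdd j0)
  set η := (s - δ)/K with hη_def
  have hη : 0 < η := div_pos (by linarith) hK
  have hmem : c + η ∈ S := by
    refine ⟨by linarith, fun i => ?_⟩
    by_cases hi : i ∈ M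
    · rw [hyM i hi, mul_zero, add_zero]
      exact le_of_eq hi
    · have h1 : x i + (c + η) * y i = x' i + η * y i := by rw [hx'i]; ring
      have h2 : η * |y i| ≤ η * K := mul_le_mul_of_nonneg_left (le_ciSup hybdd i) hη.le
      have h3 : η * K = s - δ := div_mul_cancel₀ _ (ne_of_gt hK)
      calc |x i + (c + η) * y i| = |x' i + η * y i| := by rw [h1]
        _ ≤ |x' i| + |η * y i| := abs_add_le _ _
        _ = |x' i| + η * |y i| := by rw [abs_mul, abs_of_nonneg hη.le]
        _ ≤ δ + (s - δ) := by linarith [hδge i hi]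
        _ = s := by ring
  have := le_csSup hSbdd hmem
  linarith

/-- Plichko's lemma: in a linear space of sequences vanishing at infinity, every
`n`-dimensional subspace contains a nonzero element whose maximal absolute value
is attained in at least `n` coordinates. -/
theorem stmt_11 (X : Submodule ℝ (ℕ → ℝ))
    (hX : ∀ x ∈ X, Filter.Tendsto x Filter.atTop (𝓝 0))
    (n : ℕ) (hn : 1 ≤ n) (E : Submodule ℝ (ℕ → ℝ)) (hEX : E ≤ X)
    (hdim : Module.finrank ℝ E = n) :
    ∃ x ∈ E, x ≠ 0 ∧ n ≤ {i : ℕ | |x i| = ⨆ j, |x j|}.ncard := by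
  obtain ⟨x, hxE, hx0⟩ : ∃ x ∈ E, x ≠ 0 := by
    have hE : E ≠ ⊥ := by
      intro h
      rw [h, finrank_bot] at hdim
      omega
    exact (Submodule.ne_bot_iff E).mp hE
  suffices h : ∀ m : ℕ, ∀ x : ℕ → ℝ, x ∈ E → x ≠ 0 →
      n - {i | |x i| = ⨆ j, |x j|}.ncard ≤ m →
      ∃ x' ∈ E, x' ≠ 0 ∧ n ≤ {i | |x' i| = ⨆ j, |x' j|}.ncard by
    exact h n x hxE hx0 (Nat.sub_le _ _)
  intro m
  induction m with
  | zero =>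
    intro x hxE hx0 hle
    exact ⟨x, hxE, hx0, by omega⟩
  | succ m ih =>
    intro x hxE hx0 hle
    by_cases hc : n ≤ {i | |x i| = ⨆ j, |x j|}.ncard
    · exact ⟨x, hxE, hx0, hc⟩
    · obtain ⟨x', hx'E, hx'0, hlt⟩ := plichko_step X hX E hEX hdim hxE hx0 (not_le.mp hc)
      exact ih x' hx'E hx'0 (by omega)
end

section
/- Let 0 < p_- ≤ p_n < q_n ≤ q_+ < ∞ for all n, and suppose q_n - p_n ≥ α > 0 for all n. Then the Bernstein numbers of the embedding id: ℓ_{p_n} → ℓ_{q_n} satisfy b_n(id) ≤ n^{-α/((q_+ - α) q_+)}. -/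
open scoped ENNReal

/-- `n`-th Bernstein number of the natural embedding `id : ℓ_{p_n} → ℓ_{q_n}`:
supremum over `n`-dimensional subspaces of `ℓ_{p_n}` of the infimum of `‖a‖_{q_n}`
over elements with `‖a‖_{p_n} = 1`. -/
noncomputable def bern (p q : ℕ → ℝ) (n : ℕ) : ℝ≥0∞ :=
  ⨆ E : {E : Submodule ℝ (ℕ → ℝ) //
      Module.finrank ℝ E = n ∧ ∀ a ∈ E, vNorm p a ≠ ⊤},
    ⨅ a : {a : ℕ → ℝ // a ∈ E.1 ∧ vNorm p a = 1}, vNorm q a.1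


-- upward closedness
lemma memS_mono (p a : ℕ → ℝ) (hp : ∀ n, 0 ≤ p n) {l l' : ℝ≥0∞}
    (hl : l ∈ {l : ℝ≥0∞ | 0 < l ∧ l ≠ ⊤ ∧
      (∑' n, ENNReal.ofReal ((|a n| / l.toReal) ^ p n)) ≤ 1})
    (hle : l ≤ l') (hl' : l' ≠ ⊤) :
    l' ∈ {l : ℝ≥0∞ | 0 < l ∧ l ≠ ⊤ ∧
      (∑' n, ENNReal.ofReal ((|a n| / l.toReal) ^ p n)) ≤ 1} := by
  obtain ⟨h0, hT, hs⟩ := hl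
  refine ⟨lt_of_lt_of_le h0 hle, hl', le_trans (ENNReal.tsum_le_tsum fun n => ?_) hs⟩
  apply ENNReal.ofReal_le_ofReal
  apply Real.rpow_le_rpow (by positivity) _ (hp n)
  apply div_le_div_of_nonneg_left (abs_nonneg _) (ENNReal.toReal_pos h0.ne' hT)
  exact ENNReal.toReal_le_toReal hT hl' |>.mpr hle

lemma vNorm_pos (p a : ℕ → ℝ) (hp : ∀ n, 0 < p n) {k : ℕ} (hk : a k ≠ 0) :
    ENNReal.ofReal |a k| ≤ vNorm p a := by
  apply le_sInf
  rintro l ⟨h0, hT, hs⟩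
  have hterm : ENNReal.ofReal ((|a k| / l.toReal) ^ p k) ≤ 1 :=
    le_trans (ENNReal.le_tsum k) hs
  rw [show (1 : ℝ≥0∞) = ENNReal.ofReal 1 by simp] at hterm
  have h1 : (|a k| / l.toReal) ^ p k ≤ 1 := by
    by_contra h
    push_neg at h
    have := ENNReal.ofReal_le_ofReal_iff (by norm_num) |>.mp hterm
    linarith
  have hlt : l.toReal > 0 := ENNReal.toReal_pos h0.ne' hT
  have : |a k| / l.toReal ≤ 1 := by
    by_contra h
    push_neg at h
    have := Real.one_lt_rpow_iff_of_pos (by positivity : (0:ℝ) < |a k| / l.toReal)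
      (y := p k) |>.mpr (Or.inl ⟨h, hp k⟩)
    linarith
  have : |a k| ≤ l.toReal := by
    rwa [div_le_one hlt] at this
  calc ENNReal.ofReal |a k| ≤ ENNReal.ofReal l.toReal := ENNReal.ofReal_le_ofReal this
    _ = l := ENNReal.ofReal_toReal hT

lemma finite_ge (p a : ℕ → ℝ) (qp : ℝ) (hp : ∀ n, 0 < p n) (hpqp : ∀ n, p n ≤ qp)
    (h : vNorm p a ≠ ⊤) {c : ℝ} (hc : 0 < c) : {k | c ≤ |a k|}.Finite := by
  have hS : {l : ℝ≥0∞ | 0 < l ∧ l ≠ ⊤ ∧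
      (∑' n, ENNReal.ofReal ((|a n| / l.toReal) ^ p n)) ≤ 1}.Nonempty := by
    by_contra hne
    rw [Set.not_nonempty_iff_eq_empty] at hne
    simp [vNorm, hne] at h
  obtain ⟨l, h0, hT, hs⟩ := hS
  have hlt : (0:ℝ) < l.toReal := ENNReal.toReal_pos h0.ne' hT
  set r : ℝ := min (c / l.toReal) 1 with hr
  have hr0 : 0 < r := by positivity
  have hr1 : r ≤ 1 := min_le_right _ _
  have key := ENNReal.finite_const_le_of_tsum_ne_top
    (a := fun n => ENNReal.ofReal ((|a n| / l.toReal) ^ p n))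
    (ne_top_of_le_ne_top (by simp) hs) (ε := ENNReal.ofReal (r ^ qp))
    (by simp [Real.rpow_pos_of_pos hr0, ENNReal.ofReal_pos.mpr (Real.rpow_pos_of_pos hr0 qp)])
  apply key.subset
  intro k hk
  simp only [Set.mem_setOf_eq] at hk ⊢
  apply ENNReal.ofReal_le_ofReal
  have hx : r ≤ |a k| / l.toReal := le_trans (min_le_left _ _)
    (by gcongr)
  calc r ^ qp ≤ r ^ p k := Real.rpow_le_rpow_of_exponent_ge hr0 hr1 (hpqp k)
    _ ≤ (|a k| / l.toReal) ^ p k := Real.rpow_le_rpow hr0.le hx (hp k).le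

lemma memS_smul (p a : ℕ → ℝ) {c : ℝ} (hc : 0 < c) {l : ℝ≥0∞}
    (hl : l ∈ {l : ℝ≥0∞ | 0 < l ∧ l ≠ ⊤ ∧
      (∑' n, ENNReal.ofReal ((|a n| / l.toReal) ^ p n)) ≤ 1}) :
    (ENNReal.ofReal c * l) ∈ {l : ℝ≥0∞ | 0 < l ∧ l ≠ ⊤ ∧
      (∑' n, ENNReal.ofReal ((|c • a n| / l.toReal) ^ p n)) ≤ 1} := by
  obtain ⟨h0, hT, hs⟩ := hl
  have hc' : ENNReal.ofReal c ≠ 0 := (ENNReal.ofReal_pos.mpr hc).ne'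
  refine ⟨ENNReal.mul_pos hc' h0.ne', ENNReal.mul_ne_top ENNReal.ofReal_ne_top hT, ?_⟩
  have : ∀ n:ℕ, |c • a n| / (ENNReal.ofReal c * l).toReal = |a n| / l.toReal := by
    intro n
    rw [ENNReal.toReal_mul, ENNReal.toReal_ofReal hc.le, smul_eq_mul, abs_mul,
      abs_of_pos hc, mul_div_mul_left _ _ hc.ne']
  simpa only [this] using hs

lemma vNorm_smul_le (p a : ℕ → ℝ) {c : ℝ} (hc : 0 < c) :
    vNorm p (c • a) ≤ ENNReal.ofReal c * vNorm p a := by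
  set S := {l : ℝ≥0∞ | 0 < l ∧ l ≠ ⊤ ∧
      (∑' n, ENNReal.ofReal ((|a n| / l.toReal) ^ p n)) ≤ 1} with hS
  have hc' : ENNReal.ofReal c ≠ 0 := (ENNReal.ofReal_pos.mpr hc).ne'
  rcases Set.eq_empty_or_nonempty S with h | h
  · have hT : vNorm p a = ⊤ := by rw [vNorm, ← hS, h]; simp
    rw [hT, ENNReal.mul_top hc']
    exact le_top
  · have : Nonempty S := h.to_subtype
    have hright : ENNReal.ofReal c * vNorm p a = ⨅ l : S, ENNReal.ofReal c * (l : ℝ≥0∞) := by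
      rw [vNorm, ← hS, sInf_eq_iInf']
      exact ENNReal.mul_iInf (fun h' => absurd h' ENNReal.ofReal_ne_top)
    rw [hright]
    refine le_iInf fun l => sInf_le (memS_smul p a hc l.2)

lemma vNorm_normalize (p a : ℕ → ℝ) (hT : vNorm p a ≠ ⊤) (h0 : vNorm p a ≠ 0) :
    vNorm p ((vNorm p a).toReal⁻¹ • a) = 1 := by
  set N := vNorm p a with hN
  have hNt : 0 < N.toReal := ENNReal.toReal_pos h0 hT
  have hc : 0 < N.toReal⁻¹ := by positivity
  have hofc : ENNReal.ofReal N.toReal⁻¹ = N⁻¹ := by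
    rw [ENNReal.ofReal_inv_of_pos hNt, ENNReal.ofReal_toReal hT]
  apply le_antisymm
  · calc vNorm p (N.toReal⁻¹ • a) ≤ ENNReal.ofReal N.toReal⁻¹ * N := vNorm_smul_le p a hc
      _ = N⁻¹ * N := by rw [hofc]
      _ = 1 := ENNReal.inv_mul_cancel h0 hT
  · have ha : a = N.toReal • (N.toReal⁻¹ • a) := by
      rw [smul_smul, mul_inv_cancel₀ hNt.ne', one_smul]
    have := vNorm_smul_le p (N.toReal⁻¹ • a) hNt
    rw [← ha, ← hN, ENNReal.ofReal_toReal hT] at this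
    rw [← ENNReal.mul_le_mul_iff_right h0 hT]
    simpa using this

lemma modular_le_one (p u : ℕ → ℝ) (hp : ∀ n, 0 < p n) (h1 : vNorm p u = 1) :
    (∑' k, ENNReal.ofReal (|u k| ^ p k)) ≤ 1 := by
  have hmem : ∀ r : ℝ, 1 < r →
      (∑' k, ENNReal.ofReal ((|u k| / r) ^ p k)) ≤ 1 := by
    intro r hr
    have hlt : vNorm p u < ENNReal.ofReal r := by
      rw [h1]; exact ENNReal.one_lt_ofReal.mpr hr
    rw [vNorm] at hlt
    obtain ⟨l, hl, hlr⟩ := sInf_lt_iff.mp hlt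
    have := memS_mono p u (fun n => (hp n).le) hl hlr.le ENNReal.ofReal_ne_top
    have h2 := this.2.2
    rwa [ENNReal.toReal_ofReal (by linarith)] at h2
  rw [ENNReal.tsum_eq_iSup_sum]
  apply iSup_le
  intro F
  -- real finite sum bound for each r > 1
  have hreal : ∀ r : ℝ, 1 < r → (∑ k ∈ F, (|u k| / r) ^ p k) ≤ 1 := by
    intro r hr
    have h2 := le_trans (ENNReal.sum_le_tsum F) (hmem r hr)
    rw [← ENNReal.ofReal_sum_of_nonneg (fun k _ => by positivity), ← ENNReal.ofReal_one,
      ENNReal.ofReal_le_ofReal_iff (by norm_num)] at h2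
    exact h2
  have hcont : Filter.Tendsto (fun r : ℝ => ∑ k ∈ F, (|u k| / r) ^ p k)
      (nhdsWithin 1 (Set.Ioi 1)) (nhds (∑ k ∈ F, (|u k| / 1) ^ p k)) := by
    apply tendsto_finset_sum
    intro k _
    have hb : ContinuousAt (fun r : ℝ => |u k| / r) 1 :=
      (continuousAt_const.div continuousAt_id (by norm_num))
    have := (Real.continuousAt_rpow_const _ _ (Or.inr (hp k).le)).comp hb
    exact this.tendsto.mono_left nhdsWithin_le_nhds
  have hlim : (∑ k ∈ F, (|u k| / 1) ^ p k) ≤ 1 := by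
    apply le_of_tendsto hcont
    filter_upwards [self_mem_nhdsWithin] with r hr
    exact hreal r hr
  simp only [div_one] at hlim
  calc (∑ k ∈ F, ENNReal.ofReal (|u k| ^ p k))
      = ENNReal.ofReal (∑ k ∈ F, |u k| ^ p k) :=
        (ENNReal.ofReal_sum_of_nonneg (fun k _ => by positivity)).symm
    _ ≤ 1 := by rw [← ENNReal.ofReal_one]; exact ENNReal.ofReal_le_ofReal hlim

lemma exists_max_abs (u : ℕ → ℝ) (hfin : ∀ c : ℝ, 0 < c → {k | c ≤ |u k|}.Finite)
    (hne : u ≠ 0) : ∃ k, (∀ j, |u j| ≤ |u k|) ∧ 0 < |u k| := by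
  obtain ⟨k₀, hk₀⟩ := Function.ne_iff.mp hne
  have hpos : 0 < |u k₀| := abs_pos.mpr hk₀
  have hS : {k | |u k₀| ≤ |u k|}.Finite := hfin _ hpos
  obtain ⟨b, hbS, hb⟩ := Set.exists_max_image _ (fun k => |u k|) hS ⟨k₀, by simp⟩
  refine ⟨b, fun j => ?_, lt_of_lt_of_le hpos hbS⟩
  by_cases hj : |u k₀| ≤ |u j|
  · exact hb j hj
  · push_neg at hj
    exact le_trans hj.le hbS

lemma lemA (E : Submodule ℝ (ℕ → ℝ)) (n : ℕ) (hn : 1 ≤ n)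
    (hrank : Module.finrank ℝ E = n)
    (hfin : ∀ u ∈ E, ∀ c : ℝ, 0 < c → {k | c ≤ |u k|}.Finite) :
    ∃ u ∈ E, ∃ t : ℝ, 0 < t ∧ ∃ A : Finset ℕ,
      n ≤ A.card ∧ (∀ k ∈ A, |u k| = t) ∧ ∀ k, |u k| ≤ t := by
  set P : (ℕ → ℝ) → ℝ → Finset ℕ → Prop :=
    fun u t A => u ∈ E ∧ 0 < t ∧ (∀ k ∈ A, |u k| = t) ∧ (∀ k, |u k| ≤ t) with hP
  by_contra hcon
  push_neg at hcon
  have hlt : ∀ u t A, P u t A → A.card < n := by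
    intro u t A ⟨h1, h2, h3, h4⟩
    by_contra hge
    push_neg at hge
    obtain ⟨k, hk⟩ := hcon u h1 t h2 A hge h3
    exact absurd (h4 k) (not_le.mpr hk)
  set M : Set ℕ := {m | ∃ u t A, P u t A ∧ A.card = m} with hM
  have hMbdd : BddAbove M := by
    refine ⟨n, ?_⟩
    rintro m ⟨u, t, A, hPa, rfl⟩
    exact (hlt u t A hPa).le
  have hMne : M.Nonempty := by
    have : Nontrivial E := Module.nontrivial_of_finrank_pos (R := ℝ) (by omega)
    obtain ⟨v, hv⟩ := exists_ne (0 : E)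
    have hv' : (v : ℕ → ℝ) ≠ 0 := by
      simpa [Submodule.coe_eq_zero] using hv
    obtain ⟨k, hk, hkpos⟩ := exists_max_abs v (hfin v v.2) hv'
    exact ⟨1, v, |(v : ℕ → ℝ) k|, {k}, ⟨v.2, hkpos, by simp, hk⟩, by simp⟩
  set m := sSup M with hm
  obtain ⟨u₀, t₀, A, hPA, hcard⟩ := Nat.sSup_mem hMne hMbdd
  have hmax : ∀ u t A', P u t A' → A'.card ≤ m :=
    fun u t A' h => le_csSup hMbdd ⟨u, t, A', h, rfl⟩
  obtain ⟨hu₀E, ht₀, hAt, hule⟩ := hPA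
  have hmn : m < n := by
    rw [hm, ← hcard]; exact hlt u₀ t₀ A ⟨hu₀E, ht₀, hAt, hule⟩
  -- every coordinate outside A is strictly below t₀
  have hstrict : ∀ k ∉ A, |u₀ k| < t₀ := by
    intro k hk
    rcases lt_or_eq_of_le (hule k) with h | h
    · exact h
    · exfalso
      have : P u₀ t₀ (insert k A) := ⟨hu₀E, ht₀, by
        intro j hj
        rcases Finset.mem_insert.mp hj with rfl | hj
        · exact h
        · exact hAt j hj, hule⟩
      have := hmax _ _ _ this
      rw [Finset.card_insert_of_notMem hk, hcard] at this
      omega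
  -- find v in E vanishing on A
  haveI : FiniteDimensional ℝ E := FiniteDimensional.of_finrank_pos (by omega)
  set φ : E →ₗ[ℝ] (A → ℝ) :=
    LinearMap.pi (fun k => (LinearMap.proj (k : ℕ)).comp E.subtype) with hφ
  have hninj : ¬ Function.Injective φ := by
    intro hinj
    have := LinearMap.finrank_le_finrank_of_injective hinj
    rw [hrank, Module.finrank_pi ℝ] at this
    simp only [Fintype.card_coe] at this
    omega
  rw [← LinearMap.ker_eq_bot] at hninj
  obtain ⟨v, hvker, hvne⟩ := Submodule.exists_mem_ne_zero_of_ne_bot hninj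
  have hv' : (v : ℕ → ℝ) ≠ 0 := by simpa [Submodule.coe_eq_zero] using hvne
  have hvA : ∀ k ∈ A, (v : ℕ → ℝ) k = 0 := by
    intro k hk
    have := congr_fun (LinearMap.mem_ker.mp hvker) ⟨k, hk⟩
    simpa [hφ] using this
  obtain ⟨kv, hkv, hVpos⟩ := exists_max_abs v (hfin v v.2) hv'
  set V := |(v : ℕ → ℝ) kv| with hV
  -- the feasible set G
  set G : Set ℝ := {s | 0 ≤ s ∧ ∀ k, |u₀ k + s * (v : ℕ → ℝ) k| ≤ t₀} with hG
  have hG0 : (0 : ℝ) ∈ G := ⟨le_refl _, by simpa using hule⟩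
  have hGclosed : IsClosed G := by
    have : G = Set.Ici 0 ∩ ⋂ k, {s : ℝ | |u₀ k + s * (v : ℕ → ℝ) k| ≤ t₀} := by
      ext s; simp [hG, Set.mem_iInter]
    rw [this]
    refine isClosed_Ici.inter (isClosed_iInter fun k => isClosed_le ?_ continuous_const)
    exact (continuous_const.add ((continuous_id.mul continuous_const))).abs
  have hGbdd : BddAbove G := by
    obtain ⟨k₁, hk₁⟩ := Function.ne_iff.mp hv'
    refine ⟨(t₀ + |u₀ k₁|) / |(v : ℕ → ℝ) k₁|, fun s hs => ?_⟩
    have h1 := hs.2 k₁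
    have hpos : 0 < |(v : ℕ → ℝ) k₁| := abs_pos.mpr hk₁
    rw [le_div_iff₀ hpos]
    have : s * |(v : ℕ → ℝ) k₁| = |s * (v : ℕ → ℝ) k₁| := by
      rw [abs_mul, abs_of_nonneg hs.1]
    rw [this]
    calc |s * (v : ℕ → ℝ) k₁| ≤ |u₀ k₁ + s * (v : ℕ → ℝ) k₁| + |u₀ k₁| := by
          have := abs_add_le (u₀ k₁ + s * (v : ℕ → ℝ) k₁) (-(u₀ k₁))
          simpa using this
      _ ≤ t₀ + |u₀ k₁| := by linarith
  set s₀ := sSup G with hs₀def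
  have hs₀G : s₀ ∈ G := hGclosed.csSup_mem ⟨0, hG0⟩ hGbdd
  set w : ℕ → ℝ := u₀ + s₀ • (v : ℕ → ℝ) with hw
  have hwE : w ∈ E := E.add_mem hu₀E (E.smul_mem _ v.2)
  have hwk : ∀ k, w k = u₀ k + s₀ * (v : ℕ → ℝ) k := fun k => rfl
  have hwle : ∀ k, |w k| ≤ t₀ := fun k => hs₀G.2 k
  have hwA : ∀ k ∈ A, w k = u₀ k := by
    intro k hk; rw [hwk, hvA k hk]; ring
  -- there must be a new coordinate achieving t₀
  have hk' : ∃ k' ∉ A, |w k'| = t₀ := by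
    by_contra hno
    push_neg at hno
    have hnolt : ∀ k ∉ A, |w k| < t₀ := fun k hk => lt_of_le_of_ne (hwle k) (hno k hk)
    have hS' : {k | t₀ / 2 ≤ |w k|}.Finite := hfin w hwE _ (by linarith)
    set B : Finset ℕ := hS'.toFinset \ A with hB
    set cS : Finset ℝ := insert (t₀ / 2) (B.image fun k => |w k|) with hcS
    have hcSne : cS.Nonempty := ⟨t₀ / 2, Finset.mem_insert_self _ _⟩
    set c := cS.max' hcSne with hc
    have hc1 : t₀ / 2 ≤ c := Finset.le_max' _ _ (Finset.mem_insert_self _ _)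
    have hclt : c < t₀ := by
      rw [hc, Finset.max'_lt_iff]
      intro b hb
      rcases Finset.mem_insert.mp hb with rfl | hb
      · linarith
      · obtain ⟨k, hkB, rfl⟩ := Finset.mem_image.mp hb
        exact hnolt k (Finset.mem_sdiff.mp hkB).2
    have hcb : ∀ k ∉ A, |w k| ≤ c := by
      intro k hk
      by_cases h2 : t₀ / 2 ≤ |w k|
      · apply Finset.le_max'
        exact Finset.mem_insert_of_mem (Finset.mem_image_of_mem _
          (Finset.mem_sdiff.mpr ⟨hS'.mem_toFinset.mpr h2, hk⟩))
      · push_neg at h2; linarith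
    set ε := (t₀ - c) / (2 * V) with hε
    have hεpos : 0 < ε := by
      apply div_pos (by linarith) (by linarith)
    have hmem : s₀ + ε ∈ G := by
      constructor
      · have : 0 ≤ s₀ := hs₀G.1
        linarith
      · intro k
        by_cases hkA : k ∈ A
        · rw [hvA k hkA]
          simpa using hule k
        · have heq : u₀ k + (s₀ + ε) * (v : ℕ → ℝ) k = w k + ε * (v : ℕ → ℝ) k := by
            rw [hwk]; ring
          rw [heq]
          have h1 : |w k + ε * (v : ℕ → ℝ) k| ≤ |w k| + ε * |(v : ℕ → ℝ) k| := by
            calc |w k + ε * (v : ℕ → ℝ) k| ≤ |w k| + |ε * (v : ℕ → ℝ) k| := abs_add_le _ _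
              _ = |w k| + ε * |(v : ℕ → ℝ) k| := by rw [abs_mul, abs_of_pos hεpos]
          have h2 : ε * |(v : ℕ → ℝ) k| ≤ ε * V := by
            apply mul_le_mul_of_nonneg_left (hkv k) hεpos.le
          have h3 : ε * V = (t₀ - c) / 2 := by
            rw [hε]; field_simp
          have := hcb k hkA
          calc |w k + ε * (v : ℕ → ℝ) k| ≤ |w k| + ε * V := by linarith
            _ ≤ c + (t₀ - c) / 2 := by linarith
            _ ≤ t₀ := by linarith
    have : s₀ + ε ≤ s₀ := le_csSup hGbdd hmem
    linarith
  obtain ⟨k', hk'A, hk'w⟩ := hk'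
  have hPw : P w t₀ (insert k' A) := by
    refine ⟨hwE, ht₀, ?_, hwle⟩
    intro j hj
    rcases Finset.mem_insert.mp hj with rfl | hj
    · exact hk'w
    · rw [hwA j hj]; exact hAt j hj
  have := hmax _ _ _ hPw
  rw [Finset.card_insert_of_notMem hk'A, hcard] at this
  omega

theorem stmt_12 (p q : ℕ → ℝ) (pm qp α : ℝ) (hpm0 : 0 < pm)
    (hle : ∀ n, pm ≤ p n) (hpq : ∀ n, p n < q n) (hqp : ∀ n, q n ≤ qp)
    (hα : 0 < α) (hgap : ∀ n, α ≤ q n - p n)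
    (n : ℕ) (hn : 1 ≤ n) :
    bern p q n ≤ ENNReal.ofReal ((n : ℝ) ^ (-(α / ((qp - α) * qp)))) := by
  -- basic exponent facts
  have hp0 : ∀ k, 0 < p k := fun k => lt_of_lt_of_le hpm0 (hle k)
  have hq0 : ∀ k, 0 < q k := fun k => lt_trans (hp0 k) (hpq k)
  have hqp0 : 0 < qp := lt_of_lt_of_le (hq0 0) (hqp 0)
  have hαqp : α < qp := by have := hgap 0; have := hp0 0; have := hqp 0; linarith
  have hpqpα : ∀ k, p k ≤ qp - α := by
    intro k; have := hgap k; have := hqp k; linarith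
  have hpqp : ∀ k, p k ≤ qp := fun k => by have := hpqpα k; linarith
  set β : ℝ := α / ((qp - α) * qp) with hβ
  have hβpos : 0 < β := by
    apply div_pos hα (by nlinarith)
  have hn1 : (1:ℝ) ≤ (n:ℝ) := by exact_mod_cast hn
  have hnpos : (0:ℝ) < (n:ℝ) := by linarith
  set lam : ℝ := (n:ℝ) ^ (-β) with hlam
  have hlampos : 0 < lam := Real.rpow_pos_of_pos hnpos _
  have hlamle1 : lam ≤ 1 := Real.rpow_le_one_of_one_le_of_nonpos hn1 (by linarith)
  rw [bern]
  apply iSup_le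
  rintro ⟨E, hrankE, hfinE⟩
  -- get the flat vector
  obtain ⟨u₀, hu₀E, t', ht', A, hcardA, hAeq, hAle⟩ :=
    lemA E n hn hrankE (fun u hu c hc => finite_ge p u qp hp0 hpqp (hfinE u hu) hc)
  have hAne : A.Nonempty := Finset.card_pos.mp (by omega)
  obtain ⟨k₀, hk₀A⟩ := hAne
  have hu₀k₀ : u₀ k₀ ≠ 0 := by
    intro h
    apply ht'.ne'
    rw [← hAeq k₀ hk₀A, h, abs_zero]
  set N := vNorm p u₀ with hN
  have hNT : N ≠ ⊤ := hfinE u₀ hu₀E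
  have hN0 : N ≠ 0 := by
    intro h
    have := vNorm_pos p u₀ hp0 hu₀k₀
    rw [← hN, h, le_zero_iff, ENNReal.ofReal_eq_zero] at this
    have := abs_nonneg (u₀ k₀)
    have h2 : |u₀ k₀| = 0 := le_antisymm ‹|u₀ k₀| ≤ 0› this
    exact hu₀k₀ (abs_eq_zero.mp h2)
  set c := N.toReal⁻¹ with hc
  have hcpos : 0 < c := by
    rw [hc]; exact inv_pos.mpr (ENNReal.toReal_pos hN0 hNT)
  set u : ℕ → ℝ := c • u₀ with hu
  have huE : u ∈ E := E.smul_mem _ hu₀E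
  have hu1 : vNorm p u = 1 := vNorm_normalize p u₀ hNT hN0
  set t := c * t' with htdef
  have htpos : 0 < t := mul_pos hcpos ht'
  have huAeq : ∀ k ∈ A, |u k| = t := by
    intro k hk
    rw [hu, Pi.smul_apply, smul_eq_mul, abs_mul, abs_of_pos hcpos, hAeq k hk]
  have huAle : ∀ k, |u k| ≤ t := by
    intro k
    rw [hu, Pi.smul_apply, smul_eq_mul, abs_mul, abs_of_pos hcpos]
    exact mul_le_mul_of_nonneg_left (hAle k) hcpos.le
  -- modular bound
  have hmod : (∑' k, ENNReal.ofReal (|u k| ^ p k)) ≤ 1 := modular_le_one p u hp0 hu1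
  have huk1 : ∀ k, |u k| ≤ 1 := by
    intro k
    by_contra hgt
    push_neg at hgt
    have h1 : (1:ℝ) < |u k| ^ p k :=
      (Real.one_lt_rpow_iff_of_pos (by linarith)).mpr (Or.inl ⟨hgt, hp0 k⟩)
    have h2 : ENNReal.ofReal (|u k| ^ p k) ≤ 1 := le_trans (ENNReal.le_tsum k) hmod
    rw [← ENNReal.ofReal_one, ENNReal.ofReal_le_ofReal_iff (by norm_num)] at h2
    linarith
  have ht1 : t ≤ 1 := by rw [← huAeq k₀ hk₀A]; exact huk1 k₀
  -- n * t^(qp-α) ≤ 1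
  have hnt : (n:ℝ) * t ^ (qp - α) ≤ 1 := by
    have hterm : ∀ k ∈ A, ENNReal.ofReal (t ^ (qp - α)) ≤ ENNReal.ofReal (|u k| ^ p k) := by
      intro k hk
      rw [huAeq k hk]
      exact ENNReal.ofReal_le_ofReal
        (Real.rpow_le_rpow_of_exponent_ge htpos ht1 (hpqpα k))
    have hsum : (A.card : ℝ≥0∞) * ENNReal.ofReal (t ^ (qp - α)) ≤ 1 := by
      calc (A.card : ℝ≥0∞) * ENNReal.ofReal (t ^ (qp - α))
          = ∑ _k ∈ A, ENNReal.ofReal (t ^ (qp - α)) := by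
            rw [Finset.sum_const, nsmul_eq_mul]
        _ ≤ ∑ k ∈ A, ENNReal.ofReal (|u k| ^ p k) := Finset.sum_le_sum hterm
        _ ≤ ∑' k, ENNReal.ofReal (|u k| ^ p k) := ENNReal.sum_le_tsum A
        _ ≤ 1 := hmod
    have hn' : ((n:ℕ) : ℝ≥0∞) * ENNReal.ofReal (t ^ (qp - α)) ≤ 1 :=
      le_trans (mul_le_mul_left (by exact_mod_cast Nat.cast_le.mpr hcardA) _) hsum
    have : ENNReal.ofReal ((n:ℝ) * t ^ (qp - α)) ≤ 1 := by
      rw [ENNReal.ofReal_mul (by positivity)]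
      rw [ENNReal.ofReal_natCast]
      exact hn'
    rwa [ENNReal.ofReal_le_one] at this
  -- t ≤ n^(-(1/(qp-α)))
  have hqpα : (0:ℝ) < qp - α := by linarith
  have ht_le : t ≤ (n:ℝ) ^ (-(1/(qp - α))) := by
    have h1 : t ^ (qp - α) ≤ (n:ℝ)⁻¹ := by
      rw [inv_eq_one_div, le_div_iff₀ hnpos, mul_comm]
      exact hnt
    calc t = (t ^ (qp - α)) ^ (1/(qp - α)) := by
          rw [← Real.rpow_mul htpos.le, mul_one_div, div_self hqpα.ne', Real.rpow_one]
      _ ≤ ((n:ℝ)⁻¹) ^ (1/(qp - α)) := Real.rpow_le_rpow (by positivity) h1 (by positivity)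
      _ = (n:ℝ) ^ (-(1/(qp - α))) := by
          rw [← Real.rpow_neg_one ((n:ℝ)), ← Real.rpow_mul (le_of_lt hnpos)]
          norm_num
  -- final: vNorm q u ≤ ofReal lam
  have hta : t ^ α ≤ lam ^ qp := by
    have h2 : t ^ α ≤ ((n:ℝ) ^ (-(1/(qp - α)))) ^ α :=
      Real.rpow_le_rpow htpos.le ht_le hα.le
    have h3 : ((n:ℝ) ^ (-(1/(qp - α)))) ^ α = (n:ℝ) ^ (-(α/(qp - α))) := by
      rw [← Real.rpow_mul (le_of_lt hnpos)]
      congr 1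
      ring
    have h4 : lam ^ qp = (n:ℝ) ^ (-(α/(qp - α))) := by
      rw [hlam, ← Real.rpow_mul (le_of_lt hnpos)]
      congr 1
      rw [hβ]
      field_simp
    rw [h4, ← h3]
    exact h2
  have hlamqp_pos : 0 < lam ^ qp := Real.rpow_pos_of_pos hlampos _
  have hratio : t ^ α / lam ^ qp ≤ 1 := by
    rw [div_le_one hlamqp_pos]; exact hta
  have hfinal : vNorm q u ≤ ENNReal.ofReal lam := by
    apply sInf_le
    refine ⟨ENNReal.ofReal_pos.mpr hlampos, ENNReal.ofReal_ne_top, ?_⟩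
    rw [ENNReal.toReal_ofReal hlampos.le]
    have hpt : ∀ k, (|u k| / lam) ^ q k ≤ (t ^ α / lam ^ qp) * |u k| ^ p k := by
      intro k
      rcases eq_or_ne (u k) 0 with h | h
      · rw [h]
        rw [abs_zero, zero_div, Real.zero_rpow (hq0 k).ne']
        positivity
      · have habs : 0 < |u k| := abs_pos.mpr h
        have e1 : (|u k| / lam) ^ q k = |u k| ^ q k / lam ^ q k :=
          Real.div_rpow (abs_nonneg _) hlampos.le _
        have e2 : lam ^ qp ≤ lam ^ q k :=
          Real.rpow_le_rpow_of_exponent_ge hlampos hlamle1 (hqp k)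
        have e3 : |u k| ^ q k = |u k| ^ p k * |u k| ^ (q k - p k) := by
          rw [← Real.rpow_add habs]; ring_nf
        have e4 : |u k| ^ (q k - p k) ≤ t ^ (q k - p k) :=
          Real.rpow_le_rpow (abs_nonneg _) (huAle k) (by have := hgap k; linarith)
        have e5 : t ^ (q k - p k) ≤ t ^ α :=
          Real.rpow_le_rpow_of_exponent_ge htpos ht1 (hgap k)
        have e6 : |u k| ^ q k ≤ |u k| ^ p k * t ^ α := by
          calc |u k| ^ q k = |u k| ^ p k * |u k| ^ (q k - p k) := e3
            _ ≤ |u k| ^ p k * t ^ α := by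
                apply mul_le_mul_of_nonneg_left (le_trans e4 e5) (by positivity)
        calc (|u k| / lam) ^ q k = |u k| ^ q k / lam ^ q k := e1
          _ ≤ (|u k| ^ p k * t ^ α) / lam ^ qp :=
              div_le_div₀ (by positivity) e6 hlamqp_pos e2
          _ = (t ^ α / lam ^ qp) * |u k| ^ p k := by ring
    calc (∑' k, ENNReal.ofReal ((|u k| / lam) ^ q k))
        ≤ ∑' k, ENNReal.ofReal ((t ^ α / lam ^ qp) * |u k| ^ p k) :=
          ENNReal.tsum_le_tsum fun k => ENNReal.ofReal_le_ofReal (hpt k)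
      _ = ENNReal.ofReal (t ^ α / lam ^ qp) * ∑' k, ENNReal.ofReal (|u k| ^ p k) := by
          rw [← ENNReal.tsum_mul_left]
          congr 1
          ext k
          rw [ENNReal.ofReal_mul (by positivity)]
      _ ≤ ENNReal.ofReal (t ^ α / lam ^ qp) * 1 := mul_le_mul_right hmod _
      _ ≤ 1 := by
          rw [mul_one]
          exact ENNReal.ofReal_le_one.mpr hratio
  exact iInf_le_of_le ⟨u, huE, hu1⟩ hfinal
end
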